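/- arXiv:2107.14007 — 7 statements merged into one kernel-verified Lean document; each statement's English description precedes it below -/
import Mathlib

section
/- Let T be a tree on n vertices (n even) with a perfect matching given by the edge set M, and let f be a strong graceful labelling of T. Then an edge uv of T has odd edge label |f(u) − f(v)| if and only if uv ∈ M; equivalently, every edge of T not belonging to M receives an even label under f. -/
open SimpleGraph

/-- A graceful labelling of a graph `G` with `m` edges: an injective function
`f` from the vertices into `{0, 1, …, m}` such that the induced edge labels
`|f u − f v|` are pairwise distinct over the edges. -/
def IsGracefulLabeling {V : Type} (G : SimpleGraph V) (f : V → ℕ) : Prop :=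
  Function.Injective f ∧ (∀ v, f v ≤ G.edgeSet.ncard) ∧
  ∀ u v x y : V, G.Adj u v → G.Adj x y →
    Nat.dist (f u) (f v) = Nat.dist (f x) (f y) → s(u, v) = s(x, y)

/-- A strong graceful labelling of `G` on `n` vertices with respect to a matching `M`:
a graceful labelling such that `f x + f y = n - 1` for every edge `xy ∈ M`. -/
def IsStrongGracefulLabeling {V : Type} [Fintype V] (G : SimpleGraph V)
    (M : G.Subgraph) (f : V → ℕ) : Prop :=
  IsGracefulLabeling G f ∧ ∀ x y : V, M.Adj x y → f x + f y = Fintype.card V - 1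

/-!
The strong condition `f x + f y = n - 1` makes every matching edge odd, since `n` is even and
`|a - b| ≡ a + b (mod 2)`. A tree on `n` vertices has `n - 1` edges, so every label is at most
`n - 1`, and only `n / 2` values in that range are odd. The `n / 2` matching edges already use all
of them, so by gracefulness no other edge can carry an odd label.
-/

open Finset

theorem Nat.odd_dist_iff_odd_add {a b : ℕ} : Odd (Nat.dist a b) ↔ Odd (a + b) := by
  simp only [Nat.odd_iff, Nat.dist]
  omega

theorem Finset.card_le_of_forall_odd_le {s : Finset ℕ} {m : ℕ} (hs : ∀ k ∈ s, Odd k ∧ k ≤ m) :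
    #s ≤ (m + 1) / 2 := by
  have hodd : ∀ k ∈ s, k % 2 = 1 ∧ k ≤ m := fun k hk => (hs k hk).imp_left Nat.odd_iff.mp
  calc #s ≤ #(range ((m + 1) / 2)) := by
        refine card_le_card_of_injOn (· / 2) (fun k hk => ?_) (fun k hk l hl hkl => ?_)
        · have := hodd k hk
          simp only [coe_range, Set.mem_Iio]
          omega
        · have := hodd k hk
          have := hodd l hl
          simp only at hkl
          omega
    _ = (m + 1) / 2 := card_range _

namespace SimpleGraph

theorem IsTree.ncard_edgeSet_add_one {V : Type*} [Finite V] {G : SimpleGraph V} (hG : G.IsTree) :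
    G.edgeSet.ncard + 1 = Nat.card V := by
  rw [← Nat.card_coe_set_eq]
  exact (isTree_iff_connected_and_card.mp hG).2

theorem Subgraph.IsPerfectMatching.two_mul_ncard_edgeSet {V : Type*} [Fintype V]
    {G : SimpleGraph V} {M : G.Subgraph} (hM : M.IsPerfectMatching) :
    2 * M.edgeSet.ncard = Fintype.card V := by
  classical
  have hdeg := isPerfectMatching_iff_forall_degree.mp hM
  have := M.spanningCoe.sum_degrees_eq_twice_card_edges
  simp only [Subgraph.degree_spanningCoe, hdeg, sum_const, card_univ, smul_eq_mul,
    mul_one] at this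
  rw [this, ← Set.ncard_coe_finset, coe_edgeFinset, Subgraph.edgeSet_spanningCoe]

end SimpleGraph

section Labelling

variable {V : Type} {f : V → ℕ}

def edgeLabel (f : V → ℕ) : Sym2 V → ℕ :=
  Sym2.lift ⟨fun a b => Nat.dist (f a) (f b), fun a b => Nat.dist_comm (f a) (f b)⟩

@[simp]
theorem edgeLabel_mk (f : V → ℕ) (a b : V) : edgeLabel f s(a, b) = Nat.dist (f a) (f b) := rfl

namespace IsGracefulLabeling

variable {G : SimpleGraph V}

theorem edgeLabel_le (hf : IsGracefulLabeling G f) (e : Sym2 V) :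
    edgeLabel f e ≤ G.edgeSet.ncard := by
  induction e with
  | h a b =>
    have := hf.2.1 a
    have := hf.2.1 b
    simp only [edgeLabel_mk, Nat.dist]
    omega

theorem injOn_edgeLabel (hf : IsGracefulLabeling G f) : Set.InjOn (edgeLabel f) G.edgeSet := by
  intro e he e' he' h
  induction e with | h a b =>
  induction e' with | h c d =>
  exact hf.2.2 a b c d he he' h

theorem card_le_of_forall_odd (hf : IsGracefulLabeling G f) {s : Finset (Sym2 V)}
    (hsG : ↑s ⊆ G.edgeSet) (hodd : ∀ e ∈ s, Odd (edgeLabel f e)) :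
    #s ≤ (G.edgeSet.ncard + 1) / 2 := by
  classical
  rw [← card_image_of_injOn (hf.injOn_edgeLabel.mono hsG)]
  refine card_le_of_forall_odd_le fun k hk => ?_
  obtain ⟨e, he, rfl⟩ := mem_image.mp hk
  exact ⟨hodd e he, hf.edgeLabel_le e⟩

end IsGracefulLabeling

theorem IsStrongGracefulLabeling.odd_dist_of_adj [Fintype V] {G : SimpleGraph V}
    {M : G.Subgraph} (hf : IsStrongGracefulLabeling G M f) (hn : Even (Fintype.card V))
    {x y : V} (hxy : M.Adj x y) : Odd (Nat.dist (f x) (f y)) := by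
  have : Nonempty V := ⟨x⟩
  rw [Nat.odd_dist_iff_odd_add, hf.2 x y hxy]
  exact Nat.Even.sub_odd Fintype.card_pos hn odd_one

end Labelling

theorem odd_label_iff_mem_matching_general {V : Type} [Fintype V] (G : SimpleGraph V)
    (hT : G.IsTree)
    (M : G.Subgraph) (hM : M.IsPerfectMatching)
    (f : V → ℕ) (hf : IsStrongGracefulLabeling G M f) :
    ∀ u v : V, G.Adj u v → (Odd (Nat.dist (f u) (f v)) ↔ M.Adj u v) := by
  classical
  intro u v huv
  refine ⟨fun hodd => ?_, hf.odd_dist_of_adj hM.even_card⟩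
  by_contra huvM
  let s := insert s(u, v) M.edgeSet.toFinset
  have hsG : ↑s ⊆ G.edgeSet := by
    simpa [s, Set.insert_subset_iff] using ⟨huv, M.edgeSet_subset⟩
  have hs_odd : ∀ e ∈ s, Odd (edgeLabel f e) := by
    simp only [s, mem_insert, Set.mem_toFinset, forall_eq_or_imp, edgeLabel_mk]
    refine ⟨hodd, fun e he => ?_⟩
    induction e with | h x y => exact hf.odd_dist_of_adj hM.even_card he
  have hs_card : #s = M.edgeSet.ncard + 1 := by
    rw [card_insert_of_notMem (by simpa using huvM), Set.ncard_eq_toFinset_card']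
  have hle := hf.1.card_le_of_forall_odd hsG hs_odd
  have hM_card := hM.two_mul_ncard_edgeSet
  have hT_card := hT.ncard_edgeSet_add_one
  rw [Nat.card_eq_fintype_card] at hT_card
  omega

/-- For a strong graceful labelling `f` of a tree `T` on an even number of vertices with
perfect matching `M`, an edge `uv` has odd label `|f u - f v|` iff `uv ∈ M`. -/
theorem odd_label_iff_mem_matching {V : Type} [Fintype V] (G : SimpleGraph V)
    (hT : G.IsTree) (hEven : Even (Fintype.card V))
    (M : G.Subgraph) (hM : M.IsPerfectMatching)
    (f : V → ℕ) (hf : IsStrongGracefulLabeling G M f) :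
    ∀ u v : V, G.Adj u v → (Odd (Nat.dist (f u) (f v)) ↔ M.Adj u v) :=
  odd_label_iff_mem_matching_general G hT M hM f hf
end

section
/- Let T be a tree on n vertices (n even) with a perfect matching given by the edge set M, and suppose T admits a strong graceful labelling. Then the permutation g₁ = (0 1)(2 3)⋯(n−2 n−1) of {0, 1, …, n − 1}, which sends each even label 2k to 2k + 1 and each odd label 2k + 1 to 2k, is a generalised strongly graceful permutation of T; that is, for every strong graceful labelling f of T, the labelling g₁ ∘ f is again a strong graceful labelling of T. -/
open SimpleGraph

/-- `g` is a generalised strongly graceful permutation of `G` (with matching `M`):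
`g` permutes `{0, …, n-1}` and for every strong graceful labelling `f`,
the labelling `g ∘ f` is again a strong graceful labelling. -/
def IsGenStronglyGracefulPerm {V : Type} [Fintype V] (G : SimpleGraph V)
    (M : G.Subgraph) (g : ℕ → ℕ) : Prop :=
  Set.BijOn g (Set.Iio (Fintype.card V)) (Set.Iio (Fintype.card V)) ∧
  ∀ f : V → ℕ, IsStrongGracefulLabeling G M f → IsStrongGracefulLabeling G M (g ∘ f)

/-!
A strong graceful labelling `f` of a graph on `n` vertices with a perfect matching is a
bijection onto `{0, …, n - 1}`, and `n` is even. An edge `uv` whose labels have odd sum has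
odd label `d = |f u - f v|`; the matching edge whose labels are `(n - 1 - d) / 2` and
`(n - 1 + d) / 2` carries the same edge label, so by gracefulness it is `uv` itself. Hence odd
label sums occur exactly on the matching edges, where they equal `n - 1`. Swapping `2k ↔ 2k + 1`
preserves the sum of two labels of opposite parity and the difference of two labels of equal
parity. So on the matching it keeps the sums `n - 1` and sends edge labels to odd ones, while
on the other edges it keeps the (even) edge labels.
-/

lemma Nat.even_dist_iff (a b : ℕ) : Even (Nat.dist a b) ↔ Even (a + b) := by
  simp only [Nat.dist, Nat.even_iff]
  omega

lemma Nat.eq_and_eq_or_eq_and_eq_of_add_eq_of_dist_eq {a b c d : ℕ} (hs : a + b = c + d)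
    (hd : Nat.dist a b = Nat.dist c d) : (a = c ∧ b = d) ∨ (a = d ∧ b = c) := by
  simp only [Nat.dist] at hd
  omega

def pairSwap (b : ℕ) : ℕ := if Even b then b + 1 else b - 1

lemma pairSwap_eq (b : ℕ) : pairSwap b = if b % 2 = 0 then b + 1 else b - 1 := by
  simp only [pairSwap, Nat.even_iff]

lemma pairSwap_involutive : Function.Involutive pairSwap := fun b => by
  rw [pairSwap_eq, pairSwap_eq]
  split_ifs <;> omega

lemma pairSwap_lt_iff {n : ℕ} (hn : Even n) (b : ℕ) : pairSwap b < n ↔ b < n := by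
  rw [Nat.even_iff] at hn
  rw [pairSwap_eq]
  split_ifs <;> omega

lemma bijOn_pairSwap {n : ℕ} (hn : Even n) : Set.BijOn pairSwap (Set.Iio n) (Set.Iio n) :=
  have hmaps : Set.MapsTo pairSwap (Set.Iio n) (Set.Iio n) := fun _ hb =>
    (pairSwap_lt_iff hn _).2 hb
  Set.InvOn.bijOn ⟨fun b _ => pairSwap_involutive b, fun b _ => pairSwap_involutive b⟩
    hmaps hmaps

lemma even_pairSwap_add_pairSwap_iff (a b : ℕ) :
    Even (pairSwap a + pairSwap b) ↔ Even (a + b) := by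
  simp only [Nat.even_iff, pairSwap_eq]
  split_ifs <;> omega

lemma dist_pairSwap_pairSwap {a b : ℕ} (h : Even (a + b)) :
    Nat.dist (pairSwap a) (pairSwap b) = Nat.dist a b := by
  rw [Nat.even_iff] at h
  simp only [Nat.dist, pairSwap_eq]
  split_ifs <;> omega

lemma pairSwap_add_pairSwap {a b : ℕ} (h : Odd (a + b)) :
    pairSwap a + pairSwap b = a + b := by
  rw [Nat.odd_iff] at h
  simp only [pairSwap_eq]
  split_ifs <;> omega

lemma Set.range_eq_Iio_card_of_injective {V : Type*} [Fintype V] {f : V → ℕ}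
    (hinj : Function.Injective f) (hlt : ∀ v, f v < Fintype.card V) :
    Set.range f = Set.Iio (Fintype.card V) := by
  refine Set.eq_of_subset_of_ncard_le (Set.range_subset_iff.2 hlt) ?_ (Set.finite_Iio _)
  rw [Set.ncard_Iio_nat, Set.ncard_range_of_injective hinj, Nat.card_eq_fintype_card]

namespace IsStrongGracefulLabeling

variable {V : Type} [Fintype V] {G : SimpleGraph V} {M : G.Subgraph} {f : V → ℕ}

lemma lt_card (hf : IsStrongGracefulLabeling G M f) (hM : M.IsPerfectMatching) (v : V) :
    f v < Fintype.card V := by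
  obtain ⟨w, hvw⟩ := (hM.1 (hM.2 v)).exists
  have : 0 < Fintype.card V := Fintype.card_pos_iff.2 ⟨v⟩
  have := hf.2 v w hvw
  omega

lemma range_eq (hf : IsStrongGracefulLabeling G M f) (hM : M.IsPerfectMatching) :
    Set.range f = Set.Iio (Fintype.card V) :=
  Set.range_eq_Iio_card_of_injective hf.1.1 (hf.lt_card hM)

lemma odd_add_of_matching (hf : IsStrongGracefulLabeling G M f) (hM : M.IsPerfectMatching)
    {x y : V} (hxy : M.Adj x y) : Odd (f x + f y) := by
  have := Nat.even_iff.1 hM.even_card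
  have := hf.lt_card hM x
  rw [hf.2 x y hxy, Nat.odd_iff]
  omega

lemma add_eq_of_odd_add (hf : IsStrongGracefulLabeling G M f) (hM : M.IsPerfectMatching)
    {u v : V} (huv : G.Adj u v) (hodd : Odd (f u + f v)) :
    f u + f v = Fintype.card V - 1 := by
  set n := Fintype.card V
  set d := Nat.dist (f u) (f v)
  have hn : n % 2 = 0 := Nat.even_iff.1 hM.even_card
  have hd : d % 2 = 1 := by
    have := Nat.odd_iff.1 hodd
    simp only [d, Nat.dist]
    omega
  have hdn : d < n := by
    have := hf.lt_card hM u
    have := hf.lt_card hM v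
    simp only [d, Nat.dist]
    omega
  obtain ⟨x, hx⟩ : (n - 1 - d) / 2 ∈ Set.range f := by
    rw [hf.range_eq hM]
    exact Set.mem_Iio.2 (by omega)
  obtain ⟨y, hxy⟩ := (hM.1 (hM.2 x)).exists
  have hsum := hf.2 x y hxy
  have hdist : d = Nat.dist (f x) (f y) := by
    rw [Nat.dist_eq_sub_of_le (by omega)]
    omega
  obtain ⟨rfl, rfl⟩ | ⟨rfl, rfl⟩ := Sym2.eq_iff.1 (hf.1.2.2 u v x y huv hxy.adj_sub hdist)
  · exact hsum
  · rwa [add_comm]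

lemma pairSwap_comp_edge_labels_injective (hf : IsStrongGracefulLabeling G M f)
    (hM : M.IsPerfectMatching) {u v x y : V} (huv : G.Adj u v) (hxy : G.Adj x y)
    (hd : Nat.dist (pairSwap (f u)) (pairSwap (f v)) = Nat.dist (pairSwap (f x)) (pairSwap (f y))) :
    s(u, v) = s(x, y) := by
  have hpar : Even (f u + f v) ↔ Even (f x + f y) := by
    rw [← even_pairSwap_add_pairSwap_iff, ← Nat.even_dist_iff, hd, Nat.even_dist_iff,
      even_pairSwap_add_pairSwap_iff]
  rcases Nat.even_or_odd (f u + f v) with heven | hodd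
  · refine hf.1.2.2 u v x y huv hxy ?_
    rwa [← dist_pairSwap_pairSwap heven, ← dist_pairSwap_pairSwap (hpar.1 heven)]
  · have hodd' : Odd (f x + f y) := by
      rwa [← Nat.not_even_iff_odd, ← hpar, Nat.not_even_iff_odd]
    have hs : pairSwap (f u) + pairSwap (f v) = pairSwap (f x) + pairSwap (f y) := by
      rw [pairSwap_add_pairSwap hodd, pairSwap_add_pairSwap hodd',
        hf.add_eq_of_odd_add hM huv hodd, hf.add_eq_of_odd_add hM hxy hodd']
    have hinj := pairSwap_involutive.injective.comp hf.1.1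
    rcases Nat.eq_and_eq_or_eq_and_eq_of_add_eq_of_dist_eq hs hd with
      ⟨h₁, h₂⟩ | ⟨h₁, h₂⟩
    · rw [hinj h₁, hinj h₂]
    · rw [hinj h₁, hinj h₂, Sym2.eq_swap]

lemma pairSwap_comp (hf : IsStrongGracefulLabeling G M f) (hM : M.IsPerfectMatching) :
    IsStrongGracefulLabeling G M (pairSwap ∘ f) := by
  refine ⟨⟨pairSwap_involutive.injective.comp hf.1.1, fun v => ?_,
    fun u v x y huv hxy hd => hf.pairSwap_comp_edge_labels_injective hM huv hxy hd⟩,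
    fun x y hxy => ?_⟩
  · obtain ⟨w, hw⟩ : pairSwap (f v) ∈ Set.range f := by
      rw [hf.range_eq hM]
      exact (pairSwap_lt_iff hM.even_card _).2 (hf.lt_card hM v)
    rw [Function.comp_apply, ← hw]
    exact hf.1.2.1 w
  · exact (pairSwap_add_pairSwap (hf.odd_add_of_matching hM hxy)).trans (hf.2 x y hxy)

end IsStrongGracefulLabeling

theorem g1_genStronglyGracefulPerm_general {V : Type} [Fintype V] (G : SimpleGraph V)
    (M : G.Subgraph) (hM : M.IsPerfectMatching) :
    IsGenStronglyGracefulPerm G M (fun b => if Even b then b + 1 else b - 1) :=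
  ⟨bijOn_pairSwap hM.even_card, fun _ hf => hf.pairSwap_comp hM⟩

/-- The permutation `g₁ = (0 1)(2 3)⋯(n-2 n-1)`, sending each even label `b` to `b + 1`
and each odd label `b` to `b - 1`, is a generalised strongly graceful permutation of a
strongly graceful tree `T` on `n` vertices (with perfect matching `M`). -/
theorem g1_genStronglyGracefulPerm {V : Type} [Fintype V] (G : SimpleGraph V)
    (hT : G.IsTree) (hEven : Even (Fintype.card V))
    (M : G.Subgraph) (hM : M.IsPerfectMatching)
    (hex : ∃ f : V → ℕ, IsStrongGracefulLabeling G M f) :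
    IsGenStronglyGracefulPerm G M (fun b => if Even b then b + 1 else b - 1) :=
  g1_genStronglyGracefulPerm_general G M hM
end

section
/- Let T be a tree on n vertices with a perfect matching given by the edge set M, with n ≥ 4, let f be a strong graceful labelling of T, and let v₀, v₁, v₂, v₃ be a path in T with f(v₀) = 0, f(v₁) = n − 1, f(v₂) = 1, f(v₃) = n − 2, v₀v₁ ∈ M and v₂v₃ ∈ M. Then there exist strong graceful labellings f₁, f₂, f₃ of T such that: (i) f₁(v₁) = 0, f₁(v₀) = n − 1, f₁(v₂) = n − 2, f₁(v₃) = 1; (ii) f₂(v₂) = 0, f₂(v₀) = 1, f₂(v₁) = n − 2, f₂(v₃) = n − 1; (iii) f₃(v₃) = 0, f₃(v₀) = n − 2, f₃(v₁) = 1, f₃(v₂) = n − 1. -/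
/-!
Complementing the labels, `a ↦ n - 1 - a`, preserves strong gracefulness. The second labelling
swaps `2k ↔ 2k + 1`. Since `n` is even, a matching edge joins labels `a` and `n - 1 - a` of
opposite parity, and the swap keeps its label sum `n - 1`. Every other edge joins labels of equal
parity: otherwise its odd label difference `d` would also be the difference of the matching edge
whose endpoints carry `(n - 1 - d) / 2` and `(n - 1 + d) / 2` (the labels of a tree fill
`{0, …, n - 1}`). The swap preserves differences of labels of equal parity, and matching edges
are the only edges with odd difference, so the edge labels stay distinct. Complementing the swapped labelling gives the third labelling.
-/

open SimpleGraph

theorem SimpleGraph.IsTree.ncard_edgeSet_add_one_s8 {V : Type} [Fintype V] {G : SimpleGraph V}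
    (hT : G.IsTree) : G.edgeSet.ncard + 1 = Fintype.card V := by
  classical
  rw [← hT.card_edgeFinset, ← coe_edgeFinset, Set.ncard_coe_finset]

theorem SimpleGraph.Subgraph.IsPerfectMatching.card_sub_one_mod_two {V : Type} [Fintype V]
    [Nonempty V] {G : SimpleGraph V} {M : G.Subgraph} (hM : M.IsPerfectMatching) :
    (Fintype.card V - 1) % 2 = 1 := by
  have hpos := Fintype.card_pos (α := V)
  have heven := Nat.even_iff.1 hM.even_card
  omega

def parityFlip (a : ℕ) : ℕ := if a % 2 = 0 then a + 1 else a - 1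

theorem parityFlip_injective : Function.Injective parityFlip := by
  intro a b h
  simp only [parityFlip] at h
  split_ifs at h <;> omega

theorem parityFlip_le {a m : ℕ} (hm : m % 2 = 1) (ha : a ≤ m) : parityFlip a ≤ m := by
  unfold parityFlip
  split_ifs <;> omega

theorem parityFlip_add_parityFlip {a b : ℕ} (h : (a + b) % 2 = 1) :
    parityFlip a + parityFlip b = a + b := by
  unfold parityFlip
  split_ifs <;> omega

theorem dist_parityFlip_of_mod_two_eq {a b : ℕ} (h : a % 2 = b % 2) :
    Nat.dist (parityFlip a) (parityFlip b) = Nat.dist a b := by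
  simp only [parityFlip, Nat.dist]
  split_ifs <;> omega

section

variable {V : Type} [Fintype V] {G : SimpleGraph V} {M : G.Subgraph} {f : V → ℕ}

namespace IsGracefulLabeling

theorem le_card_sub_one (hf : IsGracefulLabeling G f)
    (hm : G.edgeSet.ncard + 1 = Fintype.card V) (v : V) : f v ≤ Fintype.card V - 1 := by
  have := hf.2.1 v
  omega

theorem exists_apply_eq (hf : IsGracefulLabeling G f) (hm : G.edgeSet.ncard + 1 = Fintype.card V)
    {k : ℕ} (hk : k ≤ Fintype.card V - 1) : ∃ v, f v = k := by
  classical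
  have himage : Finset.univ.image f = Finset.range (Fintype.card V) := by
    apply Finset.eq_of_subset_of_card_le
    · intro a ha
      obtain ⟨v, -, rfl⟩ := Finset.mem_image.1 ha
      have := hf.le_card_sub_one hm v
      rw [Finset.mem_range]
      omega
    · rw [Finset.card_range, Finset.card_image_of_injective _ hf.1, Finset.card_univ]
  have hk' : k ∈ Finset.univ.image f := by
    rw [himage, Finset.mem_range]
    omega
  simpa using hk'

end IsGracefulLabeling

namespace IsStrongGracefulLabeling

theorem compl (hf : IsStrongGracefulLabeling G M f)
    (hm : G.edgeSet.ncard + 1 = Fintype.card V) :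
    IsStrongGracefulLabeling G M (fun x => Fintype.card V - 1 - f x) := by
  have hle := hf.1.le_card_sub_one hm
  refine ⟨⟨fun a b h => hf.1.1 ?_, fun v => ?_,
    fun u v x y huv hxy hd => hf.1.2.2 u v x y huv hxy ?_⟩, fun x y hxy => ?_⟩
  · have := hle a; have := hle b
    simp only at h
    omega
  · have := hle v
    simp only
    omega
  · have := hle u; have := hle v; have := hle x; have := hle y
    simp only [Nat.dist] at hd ⊢
    omega
  · have := hf.2 x y hxy; have := hle x; have := hle y
    simp only
    omega

theorem mod_two_eq_of_not_adj (hf : IsStrongGracefulLabeling G M f)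
    (hM : M.IsPerfectMatching) (hm : G.edgeSet.ncard + 1 = Fintype.card V) {u v : V}
    (huv : G.Adj u v) (hnM : ¬ M.Adj u v) : f u % 2 = f v % 2 := by
  have : Nonempty V := ⟨u⟩
  have hodd := hM.card_sub_one_mod_two
  have hu := hf.1.le_card_sub_one hm u
  have hv := hf.1.le_card_sub_one hm v
  by_contra hpar
  obtain ⟨x, hx⟩ := hf.1.exists_apply_eq hm
    (k := (Fintype.card V - 1 - Nat.dist (f u) (f v)) / 2) (by omega)
  obtain ⟨w, hxw, -⟩ := hM.1 (hM.2 x)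
  have hsum := hf.2 x w hxw
  have hdist : Nat.dist (f u) (f v) = Nat.dist (f x) (f w) := by
    simp only [Nat.dist] at hx ⊢
    omega
  rcases Sym2.eq_iff.1 (hf.1.2.2 u v x w huv (M.adj_sub hxw) hdist) with ⟨rfl, rfl⟩ | ⟨rfl, rfl⟩
  · exact hnM hxw
  · exact hnM hxw.symm

theorem parityFlip_add_parityFlip_of_adj (hf : IsStrongGracefulLabeling G M f)
    (hM : M.IsPerfectMatching) {x y : V} (hxy : M.Adj x y) :
    parityFlip (f x) + parityFlip (f y) = Fintype.card V - 1 := by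
  have : Nonempty V := ⟨x⟩
  have hodd := hM.card_sub_one_mod_two
  rw [← hf.2 x y hxy] at hodd ⊢
  exact parityFlip_add_parityFlip hodd

theorem dist_parityFlip_of_not_adj (hf : IsStrongGracefulLabeling G M f)
    (hM : M.IsPerfectMatching) (hm : G.edgeSet.ncard + 1 = Fintype.card V) {x y : V}
    (hG : G.Adj x y) (hnM : ¬ M.Adj x y) :
    Nat.dist (parityFlip (f x)) (parityFlip (f y)) = Nat.dist (f x) (f y) :=
  dist_parityFlip_of_mod_two_eq (hf.mod_two_eq_of_not_adj hM hm hG hnM)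

theorem parityFlip_comp (hf : IsStrongGracefulLabeling G M f)
    (hM : M.IsPerfectMatching) (hm : G.edgeSet.ncard + 1 = Fintype.card V) :
    IsStrongGracefulLabeling G M (parityFlip ∘ f) := by
  have hinj : Function.Injective (parityFlip ∘ f) := parityFlip_injective.comp hf.1.1
  refine ⟨⟨hinj, fun v => ?_, fun u v x y huv hxy hd => ?_⟩,
    fun x y hxy => hf.parityFlip_add_parityFlip_of_adj hM hxy⟩
  · have : Nonempty V := ⟨v⟩
    have := parityFlip_le hM.card_sub_one_mod_two (hf.1.le_card_sub_one hm v)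
    simp only [Function.comp_apply]
    omega
  have : Nonempty V := ⟨u⟩
  have hodd := hM.card_sub_one_mod_two
  simp only [Function.comp_apply, Nat.dist] at hd
  -- Matching edges now have odd label differences and all other edges even ones.
  by_cases hA : M.Adj u v <;> by_cases hB : M.Adj x y
  · have := hf.parityFlip_add_parityFlip_of_adj hM hA
    have := hf.parityFlip_add_parityFlip_of_adj hM hB
    have hpair : (parityFlip (f u) = parityFlip (f x) ∧ parityFlip (f v) = parityFlip (f y)) ∨
        (parityFlip (f u) = parityFlip (f y) ∧ parityFlip (f v) = parityFlip (f x)) := by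
      omega
    rcases hpair with ⟨hux, hvy⟩ | ⟨huy, hvx⟩
    · exact Sym2.eq_iff.2 (.inl ⟨hinj hux, hinj hvy⟩)
    · exact Sym2.eq_iff.2 (.inr ⟨hinj huy, hinj hvx⟩)
  · have := hf.parityFlip_add_parityFlip_of_adj hM hA
    have := hf.mod_two_eq_of_not_adj hM hm hxy hB
    have := hf.dist_parityFlip_of_not_adj hM hm hxy hB
    simp only [Nat.dist] at this
    omega
  · have := hf.parityFlip_add_parityFlip_of_adj hM hB
    have := hf.mod_two_eq_of_not_adj hM hm huv hA
    have := hf.dist_parityFlip_of_not_adj hM hm huv hA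
    simp only [Nat.dist] at this
    omega
  · apply hf.1.2.2 u v x y huv hxy
    rw [← hf.dist_parityFlip_of_not_adj hM hm huv hA, ← hf.dist_parityFlip_of_not_adj hM hm hxy hB]
    simpa only [Nat.dist] using hd

end IsStrongGracefulLabeling

end

theorem exists_three_relabellings_general {V : Type} [Fintype V] (G : SimpleGraph V)
    (hT : G.IsTree)
    (M : G.Subgraph) (hM : M.IsPerfectMatching)
    (f : V → ℕ) (hf : IsStrongGracefulLabeling G M f)
    (v₀ v₁ v₂ v₃ : V)
    (h0 : f v₀ = 0) (h1 : f v₁ = Fintype.card V - 1)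
    (h2 : f v₂ = 1) (h3 : f v₃ = Fintype.card V - 2) :
    (∃ f₁ : V → ℕ, IsStrongGracefulLabeling G M f₁ ∧ f₁ v₁ = 0 ∧
      f₁ v₀ = Fintype.card V - 1 ∧ f₁ v₂ = Fintype.card V - 2 ∧ f₁ v₃ = 1) ∧
    (∃ f₂ : V → ℕ, IsStrongGracefulLabeling G M f₂ ∧ f₂ v₂ = 0 ∧
      f₂ v₀ = 1 ∧ f₂ v₁ = Fintype.card V - 2 ∧ f₂ v₃ = Fintype.card V - 1) ∧
    (∃ f₃ : V → ℕ, IsStrongGracefulLabeling G M f₃ ∧ f₃ v₃ = 0 ∧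
      f₃ v₀ = Fintype.card V - 2 ∧ f₃ v₁ = 1 ∧ f₃ v₂ = Fintype.card V - 1) := by
  have : Nonempty V := ⟨v₀⟩
  have hm := hT.ncard_edgeSet_add_one_s8
  have hodd := hM.card_sub_one_mod_two
  have hflip := hf.parityFlip_comp hM hm
  refine ⟨⟨_, hf.compl hm, ?_⟩, ⟨_, hflip, ?_⟩, ⟨_, hflip.compl hm, ?_⟩⟩ <;>
    simp only [Function.comp_apply, h0, h1, h2, h3] <;> grind [parityFlip]

/-- Given a strong graceful labelling `f` of a tree `T` on `n ≥ 4` vertices with perfect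
matching `M` and a path `v₀, v₁, v₂, v₃` with `f v₀ = 0`, `f v₁ = n-1`, `f v₂ = 1`,
`f v₃ = n-2`, `v₀v₁ ∈ M`, `v₂v₃ ∈ M`, there are strong graceful labellings `f₁, f₂, f₃`
with the prescribed values on `v₀, v₁, v₂, v₃`. -/
theorem exists_three_relabellings {V : Type} [Fintype V] (G : SimpleGraph V)
    (hT : G.IsTree) (hcard : 4 ≤ Fintype.card V)
    (M : G.Subgraph) (hM : M.IsPerfectMatching)
    (f : V → ℕ) (hf : IsStrongGracefulLabeling G M f)
    (v₀ v₁ v₂ v₃ : V)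
    (h01 : G.Adj v₀ v₁) (h12 : G.Adj v₁ v₂) (h23 : G.Adj v₂ v₃)
    (hM01 : M.Adj v₀ v₁) (hM23 : M.Adj v₂ v₃)
    (h0 : f v₀ = 0) (h1 : f v₁ = Fintype.card V - 1)
    (h2 : f v₂ = 1) (h3 : f v₃ = Fintype.card V - 2) :
    (∃ f₁ : V → ℕ, IsStrongGracefulLabeling G M f₁ ∧ f₁ v₁ = 0 ∧
      f₁ v₀ = Fintype.card V - 1 ∧ f₁ v₂ = Fintype.card V - 2 ∧ f₁ v₃ = 1) ∧
    (∃ f₂ : V → ℕ, IsStrongGracefulLabeling G M f₂ ∧ f₂ v₂ = 0 ∧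
      f₂ v₀ = 1 ∧ f₂ v₁ = Fintype.card V - 2 ∧ f₂ v₃ = Fintype.card V - 1) ∧
    (∃ f₃ : V → ℕ, IsStrongGracefulLabeling G M f₃ ∧ f₃ v₃ = 0 ∧
      f₃ v₀ = Fintype.card V - 2 ∧ f₃ v₁ = 1 ∧ f₃ v₂ = Fintype.card V - 1) :=
  exists_three_relabellings_general G hT M hM f hf v₀ v₁ v₂ v₃ h0 h1 h2 h3
end

section
/- Let T be a lobster on at least 4 vertices with a perfect matching given by the edge set M, where M is exactly the set of end edges of T, and let P = v₀, v₁, …, v_p be a path in T of maximal length such that every vertex of T is at distance at most 2 from some vertex of P. Then v₁ has degree 2 in T. -/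
/-!
The end `v 0` of a maximal 2-dominating path is a leaf hanging at `v 1`: any other neighbour
could be prepended to the path. Since end edges form a perfect matching, every vertex is either a
leaf or matched to a leaf, and no vertex carries two leaves. So a third neighbour `w` of `v 1`,
off the path and not a leaf (the leaf at `v 1` is `v 0`), carries a leaf `x`. Then
`x, w, v 1, …, v p` is a longer path, and it still 2-dominates `T` because everything close to the
leaf `v 0` is at least as close to `v 1`.
-/

open SimpleGraph

/-- An end edge of `G`: an edge incident with a vertex of degree 1. -/
def IsEndEdge {V : Type} (G : SimpleGraph V) (e : Sym2 V) : Prop :=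
  e ∈ G.edgeSet ∧ ∃ x ∈ e, (G.neighborSet x).ncard = 1

/-- `v 0, v 1, …, v p` is a path in `G` (injective on indices `≤ p`, consecutive
vertices adjacent) such that every vertex of `G` is at distance at most `k` from
some vertex of the path, and the path has maximal length among all such paths. -/
def IsMaxDomPath {V : Type} (G : SimpleGraph V) (k p : ℕ) (v : ℕ → V) : Prop :=
  (∀ i ≤ p, ∀ j ≤ p, v i = v j → i = j) ∧
  (∀ i < p, G.Adj (v i) (v (i + 1))) ∧
  (∀ w, ∃ i ≤ p, G.dist w (v i) ≤ k) ∧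
  ∀ (q : ℕ) (u : ℕ → V), (∀ i ≤ q, ∀ j ≤ q, u i = u j → i = j) →
    (∀ i < q, G.Adj (u i) (u (i + 1))) →
    (∀ w, ∃ i ≤ q, G.dist w (u i) ≤ k) → q ≤ p

def seqCons {α : Type*} (a : α) (f : ℕ → α) : ℕ → α
  | 0 => a
  | i + 1 => f i

namespace SimpleGraph

variable {V : Type*} {G : SimpleGraph V}

def IsPathSeq (G : SimpleGraph V) (p : ℕ) (v : ℕ → V) : Prop :=
  (∀ i ≤ p, ∀ j ≤ p, v i = v j → i = j) ∧ ∀ i < p, G.Adj (v i) (v (i + 1))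

def DominatesWithin (G : SimpleGraph V) (k p : ℕ) (v : ℕ → V) : Prop :=
  ∀ w, ∃ i ≤ p, G.dist w (v i) ≤ k

theorem adj_of_neighborSet_eq_singleton {a b : V} (ha : G.neighborSet a = {b}) : G.Adj a b :=
  (Set.eq_singleton_iff_unique_mem.mp ha).1

theorem eq_of_adj_of_neighborSet_eq_singleton {a b c : V} (ha : G.neighborSet a = {b})
    (hc : G.Adj a c) : c = b :=
  (Set.eq_singleton_iff_unique_mem.mp ha).2 c hc

theorem neighborSet_eq_singleton_of_ncard_eq_one {a b : V}
    (ha : (G.neighborSet a).ncard = 1) (hab : G.Adj a b) : G.neighborSet a = {b} := by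
  obtain ⟨c, hc⟩ := Set.ncard_eq_one.mp ha
  have hb : b ∈ G.neighborSet a := hab
  rw [hc] at hb ⊢
  rw [Set.mem_singleton_iff.mp hb]

theorem Connected.dist_lt_of_neighborSet_eq_singleton (hG : G.Connected) {a b x : V}
    (ha : G.neighborSet a = {b}) (hx : x ≠ a) : G.dist x b < G.dist x a := by
  obtain ⟨W, hW⟩ := hG.exists_walk_length_eq_dist a x
  cases W with
  | nil => exact absurd rfl hx
  | cons hadj q =>
    obtain rfl := eq_of_adj_of_neighborSet_eq_singleton ha hadj
    have hq := dist_le q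
    rw [Walk.length_cons] at hW
    rw [dist_comm, dist_comm (u := x)]
    omega

theorem Connected.card_le_two_of_neighborSet_eq_singleton [Fintype V] (hG : G.Connected)
    {a b : V} (ha : G.neighborSet a = {b}) (hb : G.neighborSet b = {a}) :
    Fintype.card V ≤ 2 := by
  classical
  have hcover : (Finset.univ : Finset V) ⊆ {a, b} := fun x _ => by
    by_contra hx
    simp only [Finset.mem_insert, Finset.mem_singleton, not_or] at hx
    have := hG.dist_lt_of_neighborSet_eq_singleton ha hx.1
    have := hG.dist_lt_of_neighborSet_eq_singleton hb hx.2
    omega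
  exact (Finset.card_le_card hcover).trans Finset.card_le_two

namespace IsPathSeq

variable {p : ℕ} {v : ℕ → V}

theorem cons (h : G.IsPathSeq p v) {y : V} (hy : G.Adj y (v 0)) (hyv : ∀ i ≤ p, v i ≠ y) :
    G.IsPathSeq (p + 1) (seqCons y v) := by
  refine ⟨?_, ?_⟩
  · rintro (_ | i) hi (_ | j) hj hij
    · rfl
    · exact absurd hij.symm (hyv j (by omega))
    · exact absurd hij (hyv i (by omega))
    · rw [h.1 i (by omega) j (by omega) hij]
  · rintro (_ | i) hi
    · exact hy
    · exact h.2 i (by omega)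

theorem tail (h : G.IsPathSeq p v) : G.IsPathSeq (p - 1) (fun i => v (i + 1)) := by
  constructor
  · intro i hi j hj hij
    by_contra hne
    have := h.1 (i + 1) (by omega) (j + 1) (by omega) hij
    omega
  · intro i hi
    exact h.2 (i + 1) (by omega)

theorem exists_isPath_walk (h : G.IsPathSeq p v) {i n : ℕ} (hn : i + n ≤ p) :
    ∃ W : G.Walk (v i) (v (i + n)), W.IsPath ∧ W.length = n := by
  suffices ∃ W : G.Walk (v i) (v (i + n)), W.IsPath ∧ W.length = n ∧
      ∀ u ∈ W.support, ∃ t ≤ n, u = v (i + t) by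
    obtain ⟨W, hW, hlen, -⟩ := this
    exact ⟨W, hW, hlen⟩
  induction n with
  | zero => exact ⟨.nil, .nil, rfl, fun u hu => ⟨0, le_rfl, by simpa using hu⟩⟩
  | succ n ih =>
    obtain ⟨W, hW, hlen, hsupp⟩ := ih (by omega)
    have hadj : G.Adj (v (i + n)) (v (i + (n + 1))) := h.2 (i + n) (by omega)
    have hnew : v (i + (n + 1)) ∉ W.support := fun hmem => by
      obtain ⟨t, ht, heq⟩ := hsupp _ hmem
      have := h.1 _ hn _ (by omega) heq
      omega
    refine ⟨W.concat hadj, hW.concat hnew hadj, by simp [hlen], fun u hu => ?_⟩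
    simp only [Walk.support_concat, List.mem_append, List.mem_singleton] at hu
    rcases hu with hu | rfl
    · obtain ⟨t, ht, rfl⟩ := hsupp u hu
      exact ⟨t, by omega, rfl⟩
    · exact ⟨n + 1, le_rfl, rfl⟩

theorem eq_add_one_of_adj (hG : G.IsAcyclic) (h : G.IsPathSeq p v) {i j : ℕ} (hij : i ≤ j)
    (hj : j ≤ p) (hadj : G.Adj (v i) (v j)) : j = i + 1 := by
  obtain ⟨n, rfl⟩ := Nat.exists_eq_add_of_le hij
  obtain ⟨W, hW, hlen⟩ := h.exists_isPath_walk hj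
  have := congrArg (fun P : G.Path _ _ => P.1.length)
    ((hG.subsingleton_path _ _).elim ⟨W, hW⟩ (Path.singleton hadj))
  simp only [Path.singleton, Walk.length_cons, Walk.length_nil, hlen] at this
  omega

theorem eq_add_one_or_eq_add_one_of_adj (hG : G.IsAcyclic) (h : G.IsPathSeq p v) {i j : ℕ}
    (hi : i ≤ p) (hj : j ≤ p) (hadj : G.Adj (v i) (v j)) : j = i + 1 ∨ i = j + 1 := by
  rcases le_total i j with hij | hji
  · exact .inl (h.eq_add_one_of_adj hG hij hj hadj)
  · exact .inr (h.eq_add_one_of_adj hG hji hi hadj.symm)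

end IsPathSeq

namespace DominatesWithin

variable {k p : ℕ} {v : ℕ → V}

theorem cons (h : G.DominatesWithin k p v) (y : V) :
    G.DominatesWithin k (p + 1) (seqCons y v) := fun w => by
  obtain ⟨i, hi, hw⟩ := h w
  exact ⟨i + 1, by omega, hw⟩

theorem tail (hG : G.Connected) (hk : 1 ≤ k) (h0 : G.neighborSet (v 0) = {v 1})
    (h : G.DominatesWithin k p v) : G.DominatesWithin k (p - 1) (fun i => v (i + 1)) := fun w => by
  obtain ⟨_ | i, hi, hw⟩ := h w
  · refine ⟨0, Nat.zero_le _, ?_⟩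
    show G.dist w (v 1) ≤ k
    rcases eq_or_ne w (v 0) with rfl | hw0
    · rwa [dist_eq_one_iff_adj.mpr (adj_of_neighborSet_eq_singleton h0)]
    · exact ((hG.dist_lt_of_neighborSet_eq_singleton h0 hw0).trans_le hw).le
  · exact ⟨i, by omega, hw⟩

end DominatesWithin

end SimpleGraph

section EndEdges

variable {V : Type} {G : SimpleGraph V} {M : G.Subgraph}

theorem SimpleGraph.Subgraph.adj_of_neighborSet_eq_singleton
    (hend : ∀ e, IsEndEdge G e → e ∈ M.edgeSet) {a b : V} (ha : G.neighborSet a = {b}) :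
    M.Adj a b :=
  hend s(a, b)
    ⟨SimpleGraph.adj_of_neighborSet_eq_singleton ha, a, Sym2.mem_mk_left a b, by rw [ha, Set.ncard_singleton]⟩

theorem SimpleGraph.Subgraph.IsMatching.eq_of_neighborSet_eq_singleton (hM : M.IsMatching)
    (hend : ∀ e, IsEndEdge G e → e ∈ M.edgeSet) {a b c : V} (ha : G.neighborSet a = {b})
    (hc : G.neighborSet c = {b}) : a = c :=
  hM.eq_of_adj_right (Subgraph.adj_of_neighborSet_eq_singleton hend ha)
    (Subgraph.adj_of_neighborSet_eq_singleton hend hc)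

theorem SimpleGraph.Subgraph.IsPerfectMatching.exists_neighborSet_eq_singleton
    (hM : M.IsPerfectMatching) (hend : ∀ e ∈ M.edgeSet, IsEndEdge G e) (w : V) :
    ∃ x, G.neighborSet w = {x} ∨ G.neighborSet x = {w} := by
  obtain ⟨x, hwx, -⟩ := Subgraph.isPerfectMatching_iff.mp hM w
  obtain ⟨-, y, hy, hdeg⟩ := hend s(w, x) hwx
  refine ⟨x, ?_⟩
  rcases Sym2.mem_iff.mp hy with rfl | rfl
  · exact .inl (neighborSet_eq_singleton_of_ncard_eq_one hdeg hwx.adj_sub)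
  · exact .inr (neighborSet_eq_singleton_of_ncard_eq_one hdeg hwx.adj_sub.symm)

end EndEdges

namespace IsMaxDomPath

variable {V : Type} {G : SimpleGraph V} {k p : ℕ} {v : ℕ → V}

theorem isPathSeq (hP : IsMaxDomPath G k p v) : G.IsPathSeq p v := ⟨hP.1, hP.2.1⟩

theorem dominatesWithin (hP : IsMaxDomPath G k p v) : G.DominatesWithin k p v := hP.2.2.1

theorem le_of_isPathSeq (hP : IsMaxDomPath G k p v) {q : ℕ} {u : ℕ → V} (hu : G.IsPathSeq q u)
    (hdom : G.DominatesWithin k q u) : q ≤ p :=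
  hP.2.2.2 q u hu.1 hu.2 hdom

theorem reverse (hP : IsMaxDomPath G k p v) : IsMaxDomPath G k p (fun i => v (p - i)) := by
  obtain ⟨hinj, hadj, hdom, hmax⟩ := hP
  refine ⟨fun i hi j hj hij => ?_, fun i hi => ?_, fun w => ?_, hmax⟩
  · have := hinj (p - i) (by omega) (p - j) (by omega) hij
    omega
  · have h := hadj (p - (i + 1)) (by omega)
    rw [show p - (i + 1) + 1 = p - i by omega] at h
    exact h.symm
  · obtain ⟨i, hi, hd⟩ := hdom w
    exact ⟨p - i, by omega, by simpa only [show p - (p - i) = i by omega] using hd⟩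

theorem exists_eq_of_adj_zero (hP : IsMaxDomPath G k p v) {y : V} (hy : G.Adj y (v 0)) :
    ∃ i ≤ p, v i = y := by
  by_contra! hyv
  have := hP.le_of_isPathSeq (hP.isPathSeq.cons hy hyv) (hP.dominatesWithin.cons y)
  omega

theorem adj_zero (hG : G.IsAcyclic) (hP : IsMaxDomPath G k p v) {y : V} (hy : G.Adj (v 0) y) :
    1 ≤ p ∧ y = v 1 := by
  obtain ⟨i, hi, rfl⟩ := hP.exists_eq_of_adj_zero hy.symm
  obtain rfl := hP.isPathSeq.eq_add_one_of_adj hG (Nat.zero_le i) hi hy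
  exact ⟨hi, rfl⟩

theorem neighborSet_zero [Nontrivial V] (hG : G.IsTree) (hP : IsMaxDomPath G k p v) :
    1 ≤ p ∧ G.neighborSet (v 0) = {v 1} := by
  obtain ⟨y, hy⟩ := hG.connected.preconnected.exists_adj_of_nontrivial (v 0)
  obtain ⟨hp, rfl⟩ := hP.adj_zero hG.isAcyclic hy
  exact ⟨hp, Set.eq_singleton_iff_unique_mem.mpr ⟨hy, fun z hz => (hP.adj_zero hG.isAcyclic hz).2⟩⟩

theorem neighborSet_ne_singleton_of_adj_one (hG : G.Connected) (hk : 1 ≤ k)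
    (hP : IsMaxDomPath G k p v) (hp : 1 ≤ p) (h0 : G.neighborSet (v 0) = {v 1}) {w : V}
    (hw : G.Adj w (v 1)) (hwP : ∀ i ≤ p, v i ≠ w) (x : V) : G.neighborSet x ≠ {w} := by
  intro hx
  have hxw : G.Adj x w := adj_of_neighborSet_eq_singleton hx
  have hxP : ∀ i ≤ p - 1 + 1, seqCons w (fun i => v (i + 1)) i ≠ x := by
    rintro (_ | i) hi rfl
    · exact G.irrefl hxw
    · exact hwP i (by omega)
        (eq_of_adj_of_neighborSet_eq_singleton hx (hP.isPathSeq.2 i (by omega)).symm)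
  have hpath := (hP.isPathSeq.tail.cons hw fun i hi => hwP (i + 1) (by omega)).cons hxw hxP
  have hdom := ((hP.dominatesWithin.tail hG hk h0).cons w).cons x
  have := hP.le_of_isPathSeq hpath hdom
  omega


theorem adj_one {M : G.Subgraph} (hG : G.IsTree) (hM : M.IsPerfectMatching)
    (hMend : ∀ e, e ∈ M.edgeSet ↔ IsEndEdge G e) (hk : 1 ≤ k) (hP : IsMaxDomPath G k p v)
    (hp : 1 ≤ p) (h0 : G.neighborSet (v 0) = {v 1}) {w : V} (hw : G.Adj (v 1) w) :
    w = v 0 ∨ w = v 2 := by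
  by_contra! hw02
  have hwP : ∀ i ≤ p, v i ≠ w := by
    rintro i hi rfl
    rcases hP.isPathSeq.eq_add_one_or_eq_add_one_of_adj hG.isAcyclic hp hi hw with rfl | h
    · exact hw02.2 rfl
    · obtain rfl : i = 0 := by omega
      exact hw02.1 rfl
  obtain ⟨x, hx | hx⟩ := hM.exists_neighborSet_eq_singleton (fun e => (hMend e).1) w
  · obtain rfl := eq_of_adj_of_neighborSet_eq_singleton hx hw.symm
    exact hw02.1 (hM.1.eq_of_neighborSet_eq_singleton (fun e => (hMend e).2) hx h0)
  · exact hP.neighborSet_ne_singleton_of_adj_one hG.connected hk hp h0 hw.symm hwP x hx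

end IsMaxDomPath

/-- In a lobster `T` on at least 4 vertices whose set of end edges is a perfect matching
`M`, if `P = v 0, …, v p` is a maximal path such that every vertex is at distance at
most 2 from `P`, then `v 1` has degree 2. -/
theorem lobster_spine_second_vertex {V : Type} [Fintype V] (G : SimpleGraph V)
    (hT : G.IsTree) (hcard : 4 ≤ Fintype.card V)
    (M : G.Subgraph) (hM : M.IsPerfectMatching)
    (hMend : ∀ e, e ∈ M.edgeSet ↔ IsEndEdge G e)
    (p : ℕ) (v : ℕ → V) (hP : IsMaxDomPath G 2 p v) :
    (G.neighborSet (v 1)).ncard = 2 := by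
  have : Nontrivial V := Fintype.one_lt_card_iff_nontrivial.mp (by omega)
  obtain ⟨hp1, h0⟩ := hP.neighborSet_zero hT
  have hp2 : 2 ≤ p := by
    by_contra! hp
    obtain rfl : p = 1 := by omega
    have h1 : G.neighborSet (v 1) = {v 0} := (hP.reverse.neighborSet_zero hT).2
    have := hT.connected.card_le_two_of_neighborSet_eq_singleton h0 h1
    omega
  have h1 : G.neighborSet (v 1) = {v 0, v 2} := by
    ext w
    refine ⟨hP.adj_one hT hM hMend (by norm_num) hp1 h0, ?_⟩
    rintro (rfl | rfl)
    · exact (hP.isPathSeq.2 0 (by omega)).symm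
    · exact hP.isPathSeq.2 1 (by omega)
  rw [h1, Set.ncard_pair fun h => by have := hP.1 0 (by omega) 2 (by omega) h; omega]
end

section
/- Let T be a lobster on at least 4 vertices with a perfect matching given by the edge set M, where M is exactly the set of end edges of T, and let P = v₀, v₁, …, v_p be a path in T of maximal length such that every vertex of T is at distance at most 2 from some vertex of P. Then, except for the edges v₀v₁ and v_{p−1}v_p, no edge of P belongs to M. -/
open SimpleGraph

lemma Set.ncard_ne_one_of_mem_of_mem {α : Type*} {s : Set α} {a b : α} (ha : a ∈ s) (hb : b ∈ s)
    (hab : a ≠ b) : s.ncard ≠ 1 := by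
  intro hs
  obtain ⟨x, rfl⟩ := Set.ncard_eq_one.mp hs
  exact hab (ha.trans hb.symm)

section PathInterior

variable {V : Type} {G : SimpleGraph V} {p : ℕ} {v : ℕ → V}

lemma ncard_neighborSet_ne_one_of_path_interior (hinj : ∀ i ≤ p, ∀ j ≤ p, v i = v j → i = j)
    (hadj : ∀ i < p, G.Adj (v i) (v (i + 1))) {i : ℕ} (hi : 0 < i) (hip : i < p) :
    (G.neighborSet (v i)).ncard ≠ 1 := by
  obtain ⟨k, rfl⟩ : ∃ k, i = k + 1 := ⟨i - 1, by omega⟩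
  have hprev : v k ∈ G.neighborSet (v (k + 1)) := (hadj k (by omega)).symm
  have hnext : v (k + 2) ∈ G.neighborSet (v (k + 1)) := hadj (k + 1) hip
  refine Set.ncard_ne_one_of_mem_of_mem hprev hnext fun h => ?_
  have := hinj k (by omega) (k + 2) (by omega) h
  omega

lemma not_isEndEdge_of_path_interior (hinj : ∀ i ≤ p, ∀ j ≤ p, v i = v j → i = j)
    (hadj : ∀ i < p, G.Adj (v i) (v (i + 1))) {i : ℕ} (hi : 1 ≤ i) (hip : i + 1 < p) :
    ¬ IsEndEdge G s(v i, v (i + 1)) := by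
  rintro ⟨-, x, hx, hdeg⟩
  rcases Sym2.mem_iff.mp hx with rfl | rfl
  · exact ncard_neighborSet_ne_one_of_path_interior hinj hadj (by omega) (by omega) hdeg
  · exact ncard_neighborSet_ne_one_of_path_interior hinj hadj (by omega) hip hdeg

end PathInterior

theorem lobster_spine_interior_edges_general {V : Type} (G : SimpleGraph V)
    (M : G.Subgraph)
    (hMend : ∀ e, e ∈ M.edgeSet ↔ IsEndEdge G e)
    (p : ℕ) (v : ℕ → V) (hP : IsMaxDomPath G 2 p v) :
    ∀ i, 1 ≤ i → i + 1 < p → ¬ M.Adj (v i) (v (i + 1)) := fun i hi hip hM =>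
  not_isEndEdge_of_path_interior hP.1 hP.2.1 hi hip ((hMend _).mp (Subgraph.mem_edgeSet.mpr hM))

/-- In a lobster `T` on at least 4 vertices whose set of end edges is a perfect matching
`M`, if `P = v 0, …, v p` is a maximal path such that every vertex is at distance at
most 2 from `P`, then no edge of `P` other than `(v 0)(v 1)` and `(v (p-1))(v p)`
belongs to `M`. -/
theorem lobster_spine_interior_edges {V : Type} [Fintype V] (G : SimpleGraph V)
    (hT : G.IsTree) (hcard : 4 ≤ Fintype.card V)
    (M : G.Subgraph) (hM : M.IsPerfectMatching)
    (hMend : ∀ e, e ∈ M.edgeSet ↔ IsEndEdge G e)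
    (p : ℕ) (v : ℕ → V) (hP : IsMaxDomPath G 2 p v) :
    ∀ i, 1 ≤ i → i + 1 < p → ¬ M.Adj (v i) (v (i + 1)) :=
  lobster_spine_interior_edges_general G M hMend p v hP
end

section
/- Let T be a lobster on at least 4 vertices with a perfect matching given by the edge set M, where M is exactly the set of end edges of T, and let P = v₀, v₁, …, v_p be a path in T of maximal length such that every vertex of T is at distance at most 2 from some vertex of P. Then every vertex v_i of P with i ∉ {0, 1, p−1, p} is matched under M with an end vertex u_i of T that does not lie on P. -/
open SimpleGraph

/- Interior vertices of a path have two distinct neighbours, so they are not end vertices; hence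
the end edge matching an interior `v i` ends in a leaf `u ≠ v i`. If that leaf were on the path,
it would have to be an endpoint `v 0` or `v p`, whose only neighbour `v 1` resp. `v (p - 1)`
would then equal `v i`, which is excluded for `2 ≤ i ≤ p - 2`. -/

namespace SimpleGraph

variable {V : Type} {G : SimpleGraph V}

theorem eq_of_adj_of_adj_of_ncard_neighborSet_eq_one {u a b : V}
    (hu : (G.neighborSet u).ncard = 1) (ha : G.Adj u a) (hb : G.Adj u b) : a = b := by
  obtain ⟨c, hc⟩ := Set.ncard_eq_one.mp hu
  have ha' : a ∈ G.neighborSet u := ha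
  have hb' : b ∈ G.neighborSet u := hb
  rw [hc, Set.mem_singleton_iff] at ha' hb'
  exact ha'.trans hb'.symm

theorem Subgraph.IsPerfectMatching.exists_adj_ncard_neighborSet_eq_one {M : G.Subgraph}
    (hM : M.IsPerfectMatching) (hend : ∀ e ∈ M.edgeSet, IsEndEdge G e) {x : V}
    (hx : (G.neighborSet x).ncard ≠ 1) : ∃ u, M.Adj x u ∧ (G.neighborSet u).ncard = 1 := by
  obtain ⟨u, hu, -⟩ := hM.1 (hM.2 x)
  obtain ⟨-, y, hy, hy1⟩ := hend _ (M.mem_edgeSet.mpr hu)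
  rcases Sym2.mem_iff.mp hy with rfl | rfl
  · exact absurd hy1 hx
  · exact ⟨y, hu, hy1⟩

section Path

variable {p : ℕ} {v : ℕ → V} (hinj : ∀ i ≤ p, ∀ j ≤ p, v i = v j → i = j)
  (hadj : ∀ i < p, G.Adj (v i) (v (i + 1)))
include hadj

theorem adj_pred_of_adj_succ {j : ℕ} (hj0 : 0 < j) (hjp : j ≤ p) : G.Adj (v j) (v (j - 1)) := by
  have h := hadj (j - 1) (by omega)
  rw [Nat.sub_add_cancel hj0] at h
  exact h.symm

include hinj

theorem ncard_neighborSet_ne_one_of_pos_of_lt {j : ℕ} (hj0 : 0 < j) (hjp : j < p) :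
    (G.neighborSet (v j)).ncard ≠ 1 := fun hleaf => by
  have h := eq_of_adj_of_adj_of_ncard_neighborSet_eq_one hleaf
    (adj_pred_of_adj_succ hadj hj0 hjp.le) (hadj j hjp)
  have := hinj _ (by omega) _ (by omega) h
  omega

theorem eq_one_or_eq_pred_of_ncard_neighborSet_eq_one {i j : ℕ} (hi : i ≤ p) (hj : j ≤ p)
    (hleaf : (G.neighborSet (v j)).ncard = 1) (h : G.Adj (v j) (v i)) : i = 1 ∨ i = p - 1 := by
  rcases Nat.eq_zero_or_pos j with rfl | hj0
  · have hi0 : i ≠ 0 := by rintro rfl; exact G.ne_of_adj h rfl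
    exact .inl (hinj _ hi 1 (by omega)
      (eq_of_adj_of_adj_of_ncard_neighborSet_eq_one hleaf h (hadj 0 (by omega))))
  rcases hj.lt_or_eq with hjp | rfl
  · exact absurd hleaf (ncard_neighborSet_ne_one_of_pos_of_lt hinj hadj hj0 hjp)
  · exact .inr (hinj _ hi _ (by omega) (eq_of_adj_of_adj_of_ncard_neighborSet_eq_one hleaf h
      (adj_pred_of_adj_succ hadj hj0 le_rfl)))

end Path

end SimpleGraph

theorem lobster_spine_interior_matched_off_path_general {V : Type} (G : SimpleGraph V)
    (M : G.Subgraph) (hM : M.IsPerfectMatching)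
    (hMend : ∀ e, e ∈ M.edgeSet ↔ IsEndEdge G e)
    (p : ℕ) (v : ℕ → V) (hP : IsMaxDomPath G 2 p v) :
    ∀ i, 2 ≤ i → i + 2 ≤ p →
      ∃ u : V, M.Adj (v i) u ∧ (G.neighborSet u).ncard = 1 ∧ ∀ j ≤ p, u ≠ v j := by
  obtain ⟨hinj, hadj, -, -⟩ := hP
  intro i hi hip
  obtain ⟨u, hu, hleaf⟩ := hM.exists_adj_ncard_neighborSet_eq_one (fun e => (hMend e).1)
    (ncard_neighborSet_ne_one_of_pos_of_lt hinj hadj (j := i) (by omega) (by omega))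
  refine ⟨u, hu, hleaf, ?_⟩
  rintro j hj rfl
  have := eq_one_or_eq_pred_of_ncard_neighborSet_eq_one hinj hadj (by omega) hj hleaf
    (M.adj_sub hu).symm
  omega

/-- In a lobster `T` on at least 4 vertices whose set of end edges is a perfect matching
`M`, if `P = v 0, …, v p` is a maximal path such that every vertex is at distance at
most 2 from `P`, then every vertex `v i` with `i ∉ {0, 1, p-1, p}` is matched under
`M` with an end vertex not lying on `P`. -/
theorem lobster_spine_interior_matched_off_path {V : Type} [Fintype V] (G : SimpleGraph V)
    (hT : G.IsTree) (hcard : 4 ≤ Fintype.card V)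
    (M : G.Subgraph) (hM : M.IsPerfectMatching)
    (hMend : ∀ e, e ∈ M.edgeSet ↔ IsEndEdge G e)
    (p : ℕ) (v : ℕ → V) (hP : IsMaxDomPath G 2 p v) :
    ∀ i, 2 ≤ i → i + 2 ≤ p →
      ∃ u : V, M.Adj (v i) u ∧ (G.neighborSet u).ncard = 1 ∧ ∀ j ≤ p, u ≠ v j :=
  lobster_spine_interior_matched_off_path_general G M hM hMend p v hP
end

section
/- Let T be a lobster on n ≥ 4 vertices (n even) with a perfect matching given by the edge set M, where M is exactly the set of end edges of T, and let P = v₀, v₁, v₂, …, v_p be a path in T of maximal length such that every vertex of T is at distance at most 2 from some vertex of P. Then there exist strong graceful labellings f, f₁, f₂, f₃ of T with f(v₀) = 0, f₁(v₁) = 0, f₂(v₂) = 0, and f₃(u₂) = 0, where u₂ is the vertex matched with v₂ (i.e. v₂u₂ ∈ M). -/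
open SimpleGraph

namespace SGLaux

variable (c : ℕ → ℕ)

/-- sum of `c j` over `j ∈ [1,i)` with `j % 2 = q`. -/
def Csum (i q : ℕ) : ℕ := ∑ j ∈ Finset.Ico 1 i, if j % 2 = q then c j else 0

def kS (i : ℕ) : ℕ := (i+1)/2 + Csum c i ((i+1) % 2)
def kL (i r : ℕ) : ℕ := i/2 + Csum c i (i % 2) + r
def Nf (i : ℕ) : ℕ := i + ∑ j ∈ Finset.Ico 1 i, c j

lemma Csum_mono {i i' : ℕ} (h : i ≤ i') (q : ℕ) : Csum c i q ≤ Csum c i' q :=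
  Finset.sum_le_sum_of_subset (Finset.Ico_subset_Ico le_rfl h)

lemma Csum_add_compl {q q' : ℕ} (hq : q % 2 ≠ q' % 2) (i : ℕ) :
    Csum c i (q % 2) + Csum c i (q' % 2) = ∑ j ∈ Finset.Ico 1 i, c j := by
  unfold Csum
  rw [← Finset.sum_add_distrib]
  refine Finset.sum_congr rfl fun j _ => ?_
  rcases Nat.mod_two_eq_zero_or_one j with hj | hj <;>
    rcases Nat.mod_two_eq_zero_or_one q with h1 | h1 <;>
    rcases Nat.mod_two_eq_zero_or_one q' with h2 | h2 <;>
    simp [hj, h1, h2] at hq ⊢ <;> omega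

lemma Csum_succ_top {i : ℕ} (h : 1 ≤ i) (q : ℕ) :
    Csum c (i+1) q = Csum c i q + (if i % 2 = q then c i else 0) :=
  Finset.sum_Ico_succ_top h _

lemma Nf_succ {i : ℕ} (h : 1 ≤ i) : Nf c (i+1) = Nf c i + c i + 1 := by
  unfold Nf; rw [Finset.sum_Ico_succ_top h]; omega

lemma Nf_mono {i i' : ℕ} (h : i < i') : Nf c i < Nf c i' := by
  unfold Nf
  have := Finset.sum_le_sum_of_subset (f := c)
    (Finset.Ico_subset_Ico (a₁ := 1) le_rfl h.le)
  omega

lemma sigmaL {i : ℕ} (h : 1 ≤ i) (r : ℕ) : kS c i + kL c i r = Nf c i + r := by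
  unfold kS kL
  have h2 : Csum c i ((i+1) % 2) + Csum c i (i % 2) = ∑ j ∈ Finset.Ico 1 i, c j :=
    Csum_add_compl c (by omega) i
  unfold Nf; omega

lemma sigmaS {i : ℕ} (h : 1 ≤ i) : kS c i + kS c (i+1) = Nf c (i+1) := by
  unfold kS
  rw [Csum_succ_top c h]
  have h3 : (i+1+1) % 2 = i % 2 := by omega
  rw [h3, if_pos rfl]
  have h2 : Csum c i ((i+1) % 2) + Csum c i (i % 2) = ∑ j ∈ Finset.Ico 1 i, c j :=
    Csum_add_compl c (by omega) i
  rw [Nf_succ c h]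
  unfold Nf
  omega

lemma Nf_mono_le {i i' : ℕ} (h : i ≤ i') : Nf c i ≤ Nf c i' := by
  rcases Nat.eq_or_lt_of_le h with rfl | h'
  · exact le_rfl
  · exact (Nf_mono c h').le

lemma kS_one : kS c 1 = 1 := by
  unfold kS Csum
  simp

lemma kS_two : kS c 2 = 1 + c 1 := by
  unfold kS Csum
  rw [show Finset.Ico 1 2 = {1} from rfl]
  simp

lemma kS_pos {i : ℕ} (h : 1 ≤ i) : 1 ≤ kS c i := by
  unfold kS; have : 1 ≤ (i+1)/2 := by omega
  omega

lemma kL_pos {i r : ℕ} (h : 1 ≤ r) : 1 ≤ kL c i r := by unfold kL; omega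


/-- total number of vertices of the caterpillar with spine `1..t`. -/
def sTot (t : ℕ) : ℕ := t + ∑ j ∈ Finset.Ico 1 (t+1), c j

variable {t : ℕ}

lemma Nf_top : Nf c (t+1) = sTot c t + 1 := by
  unfold Nf sTot
  omega

lemma kSS_le {i i' : ℕ} (h1 : 1 ≤ i) (h2 : i ≤ t) (h3 : 1 ≤ i') (h4 : i' ≤ t)
    (hpar : i % 2 ≠ i' % 2) : kS c i + kS c i' ≤ sTot c t := by
  have a1 : Csum c i ((i+1) % 2) ≤ Csum c (t+1) ((i+1) % 2) := Csum_mono c (by omega) _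
  have a2 : Csum c i' ((i'+1) % 2) ≤ Csum c (t+1) ((i'+1) % 2) := Csum_mono c (by omega) _
  have a3 : Csum c (t+1) ((i+1) % 2) + Csum c (t+1) ((i'+1) % 2)
      = ∑ j ∈ Finset.Ico 1 (t+1), c j := Csum_add_compl c (by omega) _
  unfold kS at *
  unfold sTot
  omega

lemma kSL_le {i i' r : ℕ} (h1 : 1 ≤ i) (h2 : i ≤ t) (h3 : 1 ≤ i') (h4 : i' ≤ t)
    (hpar : i % 2 = i' % 2) (hr1 : 1 ≤ r) (hr2 : r ≤ c i') :
    kS c i + kL c i' r ≤ sTot c t := by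
  have a1 : Csum c i ((i+1) % 2) ≤ Csum c (t+1) ((i+1) % 2) := Csum_mono c (by omega) _
  have a2a : Csum c (i'+1) (i' % 2) = Csum c i' (i' % 2) + c i' := by
    rw [Csum_succ_top c h3, if_pos rfl]
  have a2b : Csum c (i'+1) (i' % 2) ≤ Csum c (t+1) (i' % 2) := Csum_mono c (by omega) _
  have a3 : Csum c (t+1) ((i+1) % 2) + Csum c (t+1) (i' % 2)
      = ∑ j ∈ Finset.Ico 1 (t+1), c j := Csum_add_compl c (by omega) _
  unfold kS kL at *
  unfold sTot
  omega

lemma kLL_le {i i' r r' : ℕ} (h1 : 1 ≤ i) (h2 : i ≤ t) (h3 : 1 ≤ i') (h4 : i' ≤ t)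
    (hpar : i % 2 ≠ i' % 2) (hr1 : 1 ≤ r) (hr2 : r ≤ c i) (hs1 : 1 ≤ r') (hs2 : r' ≤ c i') :
    kL c i r + kL c i' r' ≤ sTot c t := by
  have a2a : Csum c (i+1) (i % 2) = Csum c i (i % 2) + c i := by
    rw [Csum_succ_top c h1, if_pos rfl]
  have a2b : Csum c (i+1) (i % 2) ≤ Csum c (t+1) (i % 2) := Csum_mono c (by omega) _
  have b2a : Csum c (i'+1) (i' % 2) = Csum c i' (i' % 2) + c i' := by
    rw [Csum_succ_top c h3, if_pos rfl]
  have b2b : Csum c (i'+1) (i' % 2) ≤ Csum c (t+1) (i' % 2) := Csum_mono c (by omega) _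
  have a3 : Csum c (t+1) (i % 2) + Csum c (t+1) (i' % 2)
      = ∑ j ∈ Finset.Ico 1 (t+1), c j := Csum_add_compl c hpar _
  unfold kL at *
  unfold sTot
  omega

lemma kS_lt {i i' : ℕ} (h : i < i') (hpar : i % 2 = i' % 2) : kS c i < kS c i' := by
  have a1 : Csum c i ((i+1) % 2) ≤ Csum c i' ((i'+1) % 2) := by
    have : (i+1) % 2 = (i'+1) % 2 := by omega
    rw [this]; exact Csum_mono c (by omega) _
  unfold kS at *
  omega

lemma kS_inj {i i' : ℕ} (hpar : i % 2 = i' % 2) (h : kS c i = kS c i') : i = i' := by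
  rcases lt_trichotomy i i' with hl | hl | hl
  · exact absurd h (kS_lt c hl hpar).ne
  · exact hl
  · exact absurd h.symm (kS_lt c hl hpar.symm).ne

lemma kL_lt {i i' r r' : ℕ} (h0 : 1 ≤ i) (h : i < i') (hpar : i % 2 = i' % 2)
    (hr2 : r ≤ c i) (hs1 : 1 ≤ r') : kL c i r < kL c i' r' := by
  have a2a : Csum c (i+1) (i % 2) = Csum c i (i % 2) + c i := by
    rw [Csum_succ_top c h0, if_pos rfl]
  have a2b : Csum c (i+1) (i % 2) ≤ Csum c i' (i % 2) := Csum_mono c (by omega) _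
  have hc : Csum c i' (i' % 2) = Csum c i' (i % 2) := by rw [hpar]
  unfold kL at *
  omega

lemma kL_inj {i i' r r' : ℕ} (h0 : 1 ≤ i) (h0' : 1 ≤ i') (hpar : i % 2 = i' % 2)
    (hr1 : 1 ≤ r) (hr2 : r ≤ c i) (hs1 : 1 ≤ r') (hs2 : r' ≤ c i')
    (h : kL c i r = kL c i' r') : i = i' ∧ r = r' := by
  rcases lt_trichotomy i i' with hl | hl | hl
  · exact absurd h (kL_lt c h0 hl hpar hr2 hs1).ne
  · subst hl
    refine ⟨rfl, ?_⟩
    unfold kL at h; omega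
  · exact absurd h.symm (kL_lt c h0' hl hpar.symm hs2 hr1).ne

lemma kS_ne_kL {i i' r' : ℕ} (h1 : 1 ≤ i) (h3 : 1 ≤ i')
    (hpar : i % 2 ≠ i' % 2) (hs1 : 1 ≤ r') (hs2 : r' ≤ c i') :
    kS c i ≠ kL c i' r' := by
  have hq : (i+1) % 2 = i' % 2 := by omega
  rcases lt_or_ge i i' with hl | hl
  · -- kS i < kL i' r'
    have a1 : Csum c i ((i+1) % 2) ≤ Csum c i' (i' % 2) := by
      rw [hq]; exact Csum_mono c (by omega) _
    have hd : (i+1)/2 ≤ i'/2 := by omega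
    unfold kS kL at *
    omega
  · -- i > i' (cannot be equal by parity) : kS i > kL i' r'
    have hgt : i' < i := by omega
    have a2a : Csum c (i'+1) (i' % 2) = Csum c i' (i' % 2) + c i' := by
      rw [Csum_succ_top c h3, if_pos rfl]
    have a2b : Csum c (i'+1) (i' % 2) ≤ Csum c i (i' % 2) := Csum_mono c (by omega) _
    have a1 : Csum c i' (i' % 2) + c i' ≤ Csum c i ((i+1) % 2) := by rw [hq]; omega
    have hd : i'/2 + 1 ≤ (i+1)/2 := by omega
    unfold kS kL at *
    omega

end SGLaux

open SimpleGraph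

namespace SGLaux

lemma reach_pair {V : Type} {G : SimpleGraph V} {x y : V}
    (hx : ∀ z, G.Adj x z → z = y) (hy : ∀ z, G.Adj y z → z = x) :
    ∀ {a b : V} (_ : G.Walk a b), (a = x ∨ a = y) → (b = x ∨ b = y) := by
  intro a b w
  induction w with
  | nil => exact id
  | cons h w ih =>
    intro ha
    apply ih
    rcases ha with rfl | rfl
    · exact Or.inr (hx _ h)
    · exact Or.inl (hy _ h)

lemma dist_le_two {V : Type} {G : SimpleGraph V} (hconn : G.Connected) {a b : V}
    (h : G.dist a b ≤ 2) : a = b ∨ G.Adj a b ∨ ∃ y, G.Adj a y ∧ G.Adj y b := by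
  obtain ⟨w, hw⟩ := hconn.exists_walk_length_eq_dist a b
  rw [← hw] at h
  clear hw
  cases w with
  | nil => exact Or.inl rfl
  | cons h1 w1 =>
    cases w1 with
    | nil => exact Or.inr (Or.inl h1)
    | cons h2 w2 =>
      simp only [Walk.length_cons] at h
      have hl : w2.length = 0 := by omega
      have := (Walk.eq_of_length_eq_zero hl)
      subst this
      exact Or.inr (Or.inr ⟨_, h1, h2⟩)

lemma dist_le_one_of_adj {V : Type} {G : SimpleGraph V} {a b : V} (h : G.Adj a b) :
    G.dist a b ≤ 1 := by
  have := SimpleGraph.dist_le (Walk.cons h Walk.nil)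
  simpa using this

example : True := trivial

lemma nat_dist_compl {m a b : ℕ} (ha : a ≤ m) (hb : b ≤ m) :
    Nat.dist (m - a) (m - b) = Nat.dist a b := by
  simp only [Nat.dist]; omega

end SGLaux

namespace SGLaux

variable {V : Type} [Fintype V] {G : SimpleGraph V} {M : G.Subgraph}

lemma structure_main (hT : G.IsTree) (hcard : 4 ≤ Fintype.card V)
    (hM : M.IsPerfectMatching)
    (hMend : ∀ e, e ∈ M.edgeSet ↔ (e ∈ G.edgeSet ∧ ∃ x ∈ e, (G.neighborSet x).ncard = 1)) :
    ∃ μ : V → V,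
      (∀ x, M.Adj x (μ x)) ∧ (∀ x y, M.Adj x y → y = μ x) ∧
      (∀ x, G.Adj x (μ x)) ∧ (∀ x, μ x ≠ x) ∧ (∀ x, μ (μ x) = x) ∧
      (∀ x, (G.neighborSet x).ncard = 1 → ∀ y, G.Adj x y → y = μ x) ∧
      (∀ x, (G.neighborSet x).ncard = 1 ∨ (G.neighborSet (μ x)).ncard = 1) ∧
      (∀ x, (G.neighborSet x).ncard = 1 → ¬ (G.neighborSet (μ x)).ncard = 1) ∧
      (∀ x y z, G.Adj x y → G.Adj x z → y ≠ z → ¬ (G.neighborSet x).ncard = 1) ∧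
      (∀ x, ¬ (G.neighborSet x).ncard = 1 → ∃ y, G.Adj x y ∧ y ≠ μ x) := by
  classical
  have exu : ∀ x : V, ∃ y, M.Adj x y ∧ ∀ z, M.Adj x z → z = y := by
    intro x
    obtain ⟨y, hy1, hy2⟩ := hM.1 (hM.2 x)
    exact ⟨y, hy1, hy2⟩
  choose μ hadjM huniq using exu
  have hG : ∀ x, G.Adj x (μ x) := fun x => M.adj_sub (hadjM x)
  have hinv : ∀ x, μ (μ x) = x := fun x => (huniq (μ x) x (hadjM x).symm).symm
  have hleafnb : ∀ x, (G.neighborSet x).ncard = 1 → ∀ y, G.Adj x y → y = μ x := by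
    intro x hx y hy
    have h1 : y ∈ G.neighborSet x := hy
    have h2 : μ x ∈ G.neighborSet x := hG x
    obtain ⟨a, ha⟩ := Set.ncard_eq_one.mp hx
    rw [ha, Set.mem_singleton_iff] at h1 h2
    rw [h1, h2]
  refine ⟨μ, hadjM, huniq, hG, ?_, hinv, hleafnb, ?_, ?_, ?_, ?_⟩
  · intro x h
    have := hG x
    rw [h] at this
    exact G.irrefl this
  · intro x
    have hm : s(x, μ x) ∈ M.edgeSet := SimpleGraph.Subgraph.mem_edgeSet.mpr (hadjM x)
    obtain ⟨-, z, hz, hzl⟩ := (hMend _).mp hm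
    rcases Sym2.mem_iff.mp hz with h | h
    · exact Or.inl (h ▸ hzl)
    · exact Or.inr (h ▸ hzl)
  · -- not both leaves
    intro x hx hmx
    set y := μ x with hy
    have hadjxy : G.Adj x y := hG x
    have hxy : ∀ z, G.Adj x z → z = y := hleafnb x hx
    have hyx : ∀ z, G.Adj y z → z = x := by
      intro z hz
      have h1 : z ∈ G.neighborSet y := hz
      have h2 : x ∈ G.neighborSet y := hadjxy.symm
      obtain ⟨a, ha⟩ := Set.ncard_eq_one.mp hmx
      rw [ha, Set.mem_singleton_iff] at h1 h2
      rw [h1, h2]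
    have hz : ∃ z : V, z ≠ x ∧ z ≠ y := by
      by_contra hc
      push_neg at hc
      have hsub : (Finset.univ : Finset V) ⊆ {x, y} := by
        intro z _
        rcases em (z = x) with rfl | hzx
        · simp
        · simp [hc z hzx]
      have := Finset.card_le_card hsub
      have h2 : ({x, y} : Finset V).card ≤ 2 := Finset.card_insert_le _ _ |>.trans (by simp)
      simp only [Finset.card_univ] at this
      omega
    obtain ⟨z, hz1, hz2⟩ := hz
    obtain ⟨w⟩ := hT.isConnected.preconnected x z
    rcases reach_pair hxy hyx w (Or.inl rfl) with h | h
    · exact hz1 h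
    · exact hz2 h
  · intro x y z hy hz hne hx
    obtain ⟨a, ha⟩ := Set.ncard_eq_one.mp hx
    have h1 : y ∈ G.neighborSet x := hy
    have h2 : z ∈ G.neighborSet x := hz
    rw [ha, Set.mem_singleton_iff] at h1 h2
    exact hne (h1.trans h2.symm)
  · intro x hx
    by_contra hc
    push_neg at hc
    apply hx
    have : G.neighborSet x = {μ x} := by
      ext z
      simp only [mem_neighborSet, Set.mem_singleton_iff]
      constructor
      · exact fun h => hc z h
      · rintro rfl
        exact hG x
    rw [this, Set.ncard_singleton]

end SGLaux
namespace SGLaux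

variable {V : Type} [Fintype V] {G : SimpleGraph V} {M : G.Subgraph}

lemma key (hT : G.IsTree) (hcard : 4 ≤ Fintype.card V)
    (hM : M.IsPerfectMatching)
    (hMend : ∀ e, e ∈ M.edgeSet ↔ (e ∈ G.edgeSet ∧ ∃ x ∈ e, (G.neighborSet x).ncard = 1))
    (p : ℕ) (v : ℕ → V)
    (hinj : ∀ i ≤ p, ∀ j ≤ p, v i = v j → i = j)
    (hadj : ∀ i < p, G.Adj (v i) (v (i + 1)))
    (hdom : ∀ w, ∃ i ≤ p, G.dist w (v i) ≤ 2)
    (hmax : ∀ (q : ℕ) (u : ℕ → V), (∀ i ≤ q, ∀ j ≤ q, u i = u j → i = j) →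
      (∀ i < q, G.Adj (u i) (u (i + 1))) →
      (∀ w, ∃ i ≤ q, G.dist w (u i) ≤ 2) → q ≤ p) :
    M.Adj (v 0) (v 1) ∧
    ∃ f₁ f₂ : V → ℕ,
      (Function.Injective f₁ ∧ (∀ x, f₁ x ≤ G.edgeSet.ncard) ∧
        (∀ a b x y, G.Adj a b → G.Adj x y →
          Nat.dist (f₁ a) (f₁ b) = Nat.dist (f₁ x) (f₁ y) → s(a,b) = s(x,y)) ∧
        (∀ x y, M.Adj x y → f₁ x + f₁ y = Fintype.card V - 1)) ∧
      (Function.Injective f₂ ∧ (∀ x, f₂ x ≤ G.edgeSet.ncard) ∧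
        (∀ a b x y, G.Adj a b → G.Adj x y →
          Nat.dist (f₂ a) (f₂ b) = Nat.dist (f₂ x) (f₂ y) → s(a,b) = s(x,y)) ∧
        (∀ x y, M.Adj x y → f₂ x + f₂ y = Fintype.card V - 1)) ∧
      f₁ (v 1) = 0 ∧ f₂ (v 2) = 0 := by
  classical
  obtain ⟨μ, hadjM, huniq, hμG, hμne, hμμ, hleafnb, hMleaf, hnotboth, htwo, hex⟩ :=
    structure_main hT hcard hM hMend
  set n := Fintype.card V with hn
  have hconn := hT.isConnected
  -- p ≥ 2
  have hp2 : 2 ≤ p := by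
    by_contra hlt
    push_neg at hlt
    interval_cases p
    · -- p = 0 : extend by the matched vertex
      have hcon : (1 : ℕ) ≤ 0 := by
        apply hmax 1 (fun j => if j = 0 then v 0 else μ (v 0))
        · intro i hi j hj hij
          interval_cases i <;> interval_cases j
          · rfl
          · simp only [reduceIte] at hij
            exact (hμne (v 0) hij.symm).elim
          · simp only [reduceIte] at hij
            exact (hμne (v 0) hij).elim
          · rfl
        · intro i hi
          interval_cases i
          simpa using hμG (v 0)
        · intro w
          obtain ⟨i, hi, hd⟩ := hdom w
          interval_cases i
          exact ⟨0, by omega, by simpa using hd⟩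
      omega
    · -- p = 1
      have hext : (∃ y, G.Adj (v 0) y ∧ y ≠ v 1 ∧ y ≠ v 0) ∨
          (∃ y, G.Adj (v 1) y ∧ y ≠ v 0 ∧ y ≠ v 1) := by
        by_cases hμ01 : μ (v 0) = v 1
        · by_cases hleaf0 : (G.neighborSet (v 0)).ncard = 1
          · right
            have hnl1 : ¬ (G.neighborSet (v 1)).ncard = 1 := by
              have := hnotboth (v 0) hleaf0
              rwa [hμ01] at this
            obtain ⟨y, hy1, hy2⟩ := hex (v 1) hnl1
            have hμ10 : μ (v 1) = v 0 := by rw [← hμ01, hμμ]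
            exact ⟨y, hy1, by rw [← hμ10]; exact hy2, fun h => G.irrefl (h ▸ hy1)⟩
          · left
            obtain ⟨y, hy1, hy2⟩ := hex (v 0) hleaf0
            exact ⟨y, hy1, by rw [← hμ01]; exact hy2, fun h => G.irrefl (h ▸ hy1)⟩
        · left
          exact ⟨μ (v 0), hμG (v 0), hμ01, (hμne (v 0))⟩
      have h01 : v 0 ≠ v 1 := fun h => by have := hinj 0 (by omega) 1 (by omega) h; omega
      rcases hext with ⟨y, hy1, hy2, hy3⟩ | ⟨y, hy1, hy2, hy3⟩
      · -- extend on the left : y, v0, v1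
        have hcon : (2 : ℕ) ≤ 1 := by
          apply hmax 2 (fun j => if j = 0 then y else v (j-1))
          · intro i hi j hj hij
            interval_cases i <;> interval_cases j
            · rfl
            · norm_num at hij; first
              | exact (hy3 hij).elim | exact (hy3 hij.symm).elim
              | exact (hy2 hij).elim | exact (hy2 hij.symm).elim
              | exact (h01 hij).elim | exact (h01 hij.symm).elim
            · norm_num at hij; first
              | exact (hy3 hij).elim | exact (hy3 hij.symm).elim
              | exact (hy2 hij).elim | exact (hy2 hij.symm).elim
              | exact (h01 hij).elim | exact (h01 hij.symm).elim
            · norm_num at hij; first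
              | exact (hy3 hij).elim | exact (hy3 hij.symm).elim
              | exact (hy2 hij).elim | exact (hy2 hij.symm).elim
              | exact (h01 hij).elim | exact (h01 hij.symm).elim
            · rfl
            · norm_num at hij; first
              | exact (hy3 hij).elim | exact (hy3 hij.symm).elim
              | exact (hy2 hij).elim | exact (hy2 hij.symm).elim
              | exact (h01 hij).elim | exact (h01 hij.symm).elim
            · norm_num at hij; first
              | exact (hy3 hij).elim | exact (hy3 hij.symm).elim
              | exact (hy2 hij).elim | exact (hy2 hij.symm).elim
              | exact (h01 hij).elim | exact (h01 hij.symm).elim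
            · norm_num at hij; first
              | exact (hy3 hij).elim | exact (hy3 hij.symm).elim
              | exact (hy2 hij).elim | exact (hy2 hij.symm).elim
              | exact (h01 hij).elim | exact (h01 hij.symm).elim
            · rfl
          · intro i hi
            interval_cases i
            · simpa using hy1.symm
            · simpa using hadj 0 (by omega)
          · intro w
            obtain ⟨i, hi, hd⟩ := hdom w
            exact ⟨i + 1, by omega, by simpa using hd⟩
        omega
      · -- extend on the right : v0, v1, y
        have hcon : (2 : ℕ) ≤ 1 := by
          apply hmax 2 (fun j => if j ≤ 1 then v j else y)
          · intro i hi j hj hij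
            interval_cases i <;> interval_cases j
            · rfl
            · norm_num at hij; first
              | exact (hy3 hij).elim | exact (hy3 hij.symm).elim
              | exact (hy2 hij).elim | exact (hy2 hij.symm).elim
              | exact (h01 hij).elim | exact (h01 hij.symm).elim
            · norm_num at hij; first
              | exact (hy3 hij).elim | exact (hy3 hij.symm).elim
              | exact (hy2 hij).elim | exact (hy2 hij.symm).elim
              | exact (h01 hij).elim | exact (h01 hij.symm).elim
            · norm_num at hij; first
              | exact (hy3 hij).elim | exact (hy3 hij.symm).elim
              | exact (hy2 hij).elim | exact (hy2 hij.symm).elim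
              | exact (h01 hij).elim | exact (h01 hij.symm).elim
            · rfl
            · norm_num at hij; first
              | exact (hy3 hij).elim | exact (hy3 hij.symm).elim
              | exact (hy2 hij).elim | exact (hy2 hij.symm).elim
              | exact (h01 hij).elim | exact (h01 hij.symm).elim
            · norm_num at hij; first
              | exact (hy3 hij).elim | exact (hy3 hij.symm).elim
              | exact (hy2 hij).elim | exact (hy2 hij.symm).elim
              | exact (h01 hij).elim | exact (h01 hij.symm).elim
            · norm_num at hij; first
              | exact (hy3 hij).elim | exact (hy3 hij.symm).elim
              | exact (hy2 hij).elim | exact (hy2 hij.symm).elim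
              | exact (h01 hij).elim | exact (h01 hij.symm).elim
            · rfl
          · intro i hi
            interval_cases i
            · simpa using hadj 0 (by omega)
            · simpa using hy1
          · intro w
            obtain ⟨i, hi, hd⟩ := hdom w
            refine ⟨i, by omega, ?_⟩
            have : i ≤ 1 := hi
            simpa [this] using hd
        omega
  -- distinctness helper
  have hvne : ∀ i ≤ p, ∀ j ≤ p, i ≠ j → v i ≠ v j := by
    intro i hi j hj hne h
    exact hne (hinj i hi j hj h)
  -- interior spine vertices are internal
  have hspine_int : ∀ i, 1 ≤ i → i ≤ p - 1 → ¬ (G.neighborSet (v i)).ncard = 1 := by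
    intro i h1 h2
    have ha : G.Adj (v i) (v (i+1)) := hadj i (by omega)
    have hb : G.Adj (v i) (v (i-1)) := by
      have h3 := hadj (i-1) (by omega)
      have hi4 : i - 1 + 1 = i := by omega
      rw [hi4] at h3
      exact h3.symm
    exact htwo (v i) _ _ ha hb (hvne (i+1) (by omega) (i-1) (by omega) (by omega))
  -- v 0 is a leaf
  have hv0leaf : (G.neighborSet (v 0)).ncard = 1 := by
    by_contra h0
    have hx : (G.neighborSet (μ (v 0))).ncard = 1 := (hMleaf (v 0)).resolve_left h0
    have hxoff : ∀ k ≤ p, v k ≠ μ (v 0) := by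
      intro k hk hkx
      rcases Nat.lt_or_ge k p with hk2 | hk2
      · rcases Nat.eq_zero_or_pos k with rfl | hk3
        · exact hμne (v 0) hkx.symm
        · exact hspine_int k (by omega) (by omega) (by rw [hkx]; exact hx)
      · have hkp : k = p := by omega
        rw [hkp] at hkx
        have hpadj : G.Adj (v p) (v (p-1)) := by
          have h3 := hadj (p-1) (by omega)
          have h4 : p - 1 + 1 = p := by omega
          rw [h4] at h3
          exact h3.symm
        have h5 := hleafnb (v p) (by rw [hkx]; exact hx) _ hpadj
        rw [hkx, hμμ] at h5
        have := hinj (p-1) (by omega) 0 (by omega) h5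
        omega
    have hcon : p + 1 ≤ p := by
      apply hmax (p+1) (fun j => if j = 0 then μ (v 0) else v (j-1))
      · intro i hi j hj hij
        by_cases hi0 : i = 0 <;> by_cases hj0 : j = 0
      /- both zero -/
        · omega
        · rw [if_pos hi0, if_neg hj0] at hij
          exact ((hxoff (j-1) (by omega)) hij.symm).elim
        · rw [if_neg hi0, if_pos hj0] at hij
          exact ((hxoff (i-1) (by omega)) hij).elim
        · rw [if_neg hi0, if_neg hj0] at hij
          have := hinj (i-1) (by omega) (j-1) (by omega) hij
          omega
      · intro i hi
        by_cases hi0 : i = 0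
        · subst hi0
          norm_num
          exact (hμG (v 0)).symm
        · rw [if_neg hi0, if_neg (by omega : ¬ i + 1 = 0)]
          have h3 := hadj (i-1) (by omega)
          have h4 : i - 1 + 1 = i := by omega
          rw [h4] at h3
          have h5 : i + 1 - 1 = i := by omega
          rw [h5]
          exact h3
      · intro w
        obtain ⟨i, hi, hd⟩ := hdom w
        refine ⟨i+1, by omega, ?_⟩
        rw [if_neg (by omega : ¬ i + 1 = 0)]
        simpa using hd
    omega
  -- v p is a leaf
  have hvpleaf : (G.neighborSet (v p)).ncard = 1 := by
    by_contra h0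
    have hx : (G.neighborSet (μ (v p))).ncard = 1 := (hMleaf (v p)).resolve_left h0
    have hxoff : ∀ k ≤ p, v k ≠ μ (v p) := by
      intro k hk hkx
      rcases Nat.eq_zero_or_pos k with rfl | hk3
      · have h5 := hleafnb (v 0) hv0leaf _ (hadj 0 (by omega))
        rw [hkx, hμμ] at h5
        have := hinj 1 (by omega) p (by omega) h5
        omega
      · rcases Nat.lt_or_ge k p with hk2 | hk2
        · exact hspine_int k (by omega) (by omega) (by rw [hkx]; exact hx)
        · have hkp : k = p := by omega
          rw [hkp] at hkx
          exact hμne (v p) hkx.symm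
    have hcon : p + 1 ≤ p := by
      apply hmax (p+1) (fun j => if j ≤ p then v j else μ (v p))
      · intro i hi j hj hij
        by_cases hi0 : i ≤ p <;> by_cases hj0 : j ≤ p
        · rw [if_pos hi0, if_pos hj0] at hij
          exact hinj i hi0 j hj0 hij
        · rw [if_pos hi0, if_neg hj0] at hij
          exact ((hxoff i (by omega)) hij).elim
        · rw [if_neg hi0, if_pos hj0] at hij
          exact ((hxoff j (by omega)) hij.symm).elim
        · omega
      · intro i hi
        by_cases hip : i < p
        · rw [if_pos (by omega : i ≤ p), if_pos (by omega : i + 1 ≤ p)]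
          exact hadj i hip
        · have hip' : i = p := by omega
          rw [hip', if_pos le_rfl, if_neg (by omega : ¬ p + 1 ≤ p)]
          exact hμG (v p)
      · intro w
        obtain ⟨i, hi, hd⟩ := hdom w
        refine ⟨i, by omega, ?_⟩
        rw [if_pos hi]
        exact hd
    omega
  have hμv0 : μ (v 0) = v 1 := (hleafnb (v 0) hv0leaf _ (hadj 0 (by omega))).symm
  have hvpadj : G.Adj (v p) (v (p-1)) := by
    have h3 := hadj (p-1) (by omega)
    have h4 : p - 1 + 1 = p := by omega
    rw [h4] at h3
    exact h3.symm
  have hμvp : μ (v p) = v (p-1) := (hleafnb (v p) hvpleaf _ hvpadj).symm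
  have hp3 : 3 ≤ p := by
    by_contra h
    have hp2' : p = 2 := by omega
    have h1 : μ (v 1) = v 0 := by rw [← hμv0, hμμ]
    have h2 : μ (v 1) = v 2 := by
      have : μ (v (p-1)) = v p := by rw [← hμvp, hμμ]
      rw [hp2'] at this
      norm_num at this
      exact this
    have := hvne 0 (by omega) 2 (by omega) (by omega)
    rw [← h1, ← h2] at this
    exact this rfl

  have hshift0 : ∀ w, G.dist w (v 0) ≤ 2 → G.dist w (v 1) ≤ 1 := by
    intro w hw
    rcases dist_le_two hconn hw with rfl | h | ⟨y, h1, h2⟩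
    · exact dist_le_one_of_adj (hadj 0 (by omega))
    · have h3 := hleafnb (v 0) hv0leaf w h.symm
      rw [h3, hμv0]
      simp [SimpleGraph.dist_self]
    · have h3 := hleafnb (v 0) hv0leaf y h2.symm
      rw [h3, hμv0] at h1
      exact dist_le_one_of_adj h1
  have hshiftp : ∀ w, G.dist w (v p) ≤ 2 → G.dist w (v (p-1)) ≤ 1 := by
    intro w hw
    rcases dist_le_two hconn hw with rfl | h | ⟨y, h1, h2⟩
    · exact dist_le_one_of_adj hvpadj
    · have h3 := hleafnb (v p) hvpleaf w h.symm
      rw [h3, hμvp]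
      simp [SimpleGraph.dist_self]
    · have h3 := hleafnb (v p) hvpleaf y h2.symm
      rw [h3, hμvp] at h1
      exact dist_le_one_of_adj h1
  -- every internal non-spine vertex is adjacent to an interior spine vertex v i, 2 ≤ i ≤ p-1
  have hlegadj : ∀ x, ¬ (G.neighborSet x).ncard = 1 → (∀ k, 1 ≤ k → k ≤ p-1 → x ≠ v k) →
      ∃ i, 2 ≤ i ∧ i ≤ p - 1 ∧ G.Adj x (v i) := by
    intro x hxint hxns
    have hyleaf : (G.neighborSet (μ x)).ncard = 1 := (hMleaf x).resolve_left hxint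
    have hxv0 : x ≠ v 0 := fun h => hxint (h ▸ hv0leaf)
    have hxvp : x ≠ v p := fun h => hxint (h ▸ hvpleaf)
    have hyvk : ∀ k, 1 ≤ k → k ≤ p → μ x ≠ v k := by
      intro k h1 h2 h
      rcases Nat.lt_or_ge k p with h3 | h3
      · exact (hspine_int k h1 (by omega)) (h ▸ hyleaf)
      · have hk : k = p := by omega
        rw [hk] at h
        have h4 : μ (v p) = x := by rw [← h, hμμ]
        rw [hμvp] at h4
        exact hxns (p-1) (by omega) (by omega) h4.symm
    have hyv0 : μ x ≠ v 0 := by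
      intro h
      have h4 : μ (v 0) = x := by rw [← h, hμμ]
      rw [hμv0] at h4
      exact hxns 1 (by omega) (by omega) h4.symm
    -- from domination of μ x we get adjacency of x to some interior spine vertex
    have hmain : ∃ i, 1 ≤ i ∧ i ≤ p - 1 ∧ G.Adj x (v i) := by
      obtain ⟨i, hip, hd⟩ := hdom (μ x)
      have key2 : ∀ j, 1 ≤ j → j ≤ p - 1 → G.dist (μ x) (v j) ≤ 2 →
          ∃ i, 1 ≤ i ∧ i ≤ p - 1 ∧ G.Adj x (v i) := by
        intro j hj1 hj2 hdj
        rcases dist_le_two hconn hdj with heq | hadj1 | ⟨y, h2, h3⟩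
        · exact absurd (heq ▸ hyleaf) (hspine_int j hj1 hj2)
        · exact absurd (hleafnb (μ x) hyleaf _ hadj1).symm
            (by rw [hμμ]; exact (hxns j hj1 hj2))
        · have h4 := hleafnb (μ x) hyleaf y h2
          rw [h4, hμμ] at h3
          exact ⟨j, hj1, hj2, h3⟩
      rcases Nat.eq_zero_or_pos i with rfl | hi1
      · exact key2 1 (by omega) (by omega) ((hshift0 _ hd).trans one_le_two)
      · rcases Nat.lt_or_ge i p with hi2 | hi2
        · exact key2 i hi1 (by omega) hd
        · have hip' : i = p := by omega
          rw [hip'] at hd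
          exact key2 (p-1) (by omega) (by omega) ((hshiftp _ hd).trans one_le_two)
    obtain ⟨i, hi1, hi2, hadjx⟩ := hmain
    rcases Nat.lt_or_ge i 2 with hi' | hi'
    · exfalso
      have hone : i = 1 := by omega
      rw [hone] at hadjx
      -- extension path : μ x, x, v 1, v 2, ..., v p
      have hμxx : G.Adj (μ x) x := by
        have := hμG (μ x)
        rw [hμμ] at this
        exact this
      have hcon : p + 1 ≤ p := by
        apply hmax (p+1) (fun j => if j = 0 then μ x else if j = 1 then x else v (j-1))
        · intro a ha b hb hab
          by_cases ha0 : a = 0 <;> by_cases hb0 : b = 0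
          · omega
          · rw [if_pos ha0, if_neg hb0] at hab
            by_cases hb1 : b = 1
            · rw [if_pos hb1] at hab
              exact absurd hab.symm (hμne x).symm
            · rw [if_neg hb1] at hab
              exact absurd hab (hyvk (b-1) (by omega) (by omega))
          · rw [if_neg ha0, if_pos hb0] at hab
            by_cases ha1 : a = 1
            · rw [if_pos ha1] at hab
              exact absurd hab (hμne x).symm
            · rw [if_neg ha1] at hab
              exact absurd hab.symm (hyvk (a-1) (by omega) (by omega))
          · rw [if_neg ha0, if_neg hb0] at hab
            by_cases ha1 : a = 1 <;> by_cases hb1 : b = 1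
            · omega
            · rw [if_pos ha1, if_neg hb1] at hab
              rcases Nat.lt_or_ge (b-1) p with h5 | h5
              · exact absurd hab (hxns (b-1) (by omega) (by omega))
              · have : b - 1 = p := by omega
                rw [this] at hab
                exact absurd hab hxvp
            · rw [if_neg ha1, if_pos hb1] at hab
              rcases Nat.lt_or_ge (a-1) p with h5 | h5
              · exact absurd hab.symm (hxns (a-1) (by omega) (by omega))
              · have : a - 1 = p := by omega
                rw [this] at hab
                exact absurd hab.symm hxvp
            · rw [if_neg ha1, if_neg hb1] at hab
              have := hinj (a-1) (by omega) (b-1) (by omega) hab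
              omega
        · intro a ha
          by_cases ha0 : a = 0
          · subst ha0
            norm_num
            exact hμxx
          · by_cases ha1 : a = 1
            · subst ha1
              norm_num
              exact hadjx
            · rw [if_neg ha0, if_neg ha1, if_neg (by omega : ¬ a + 1 = 0),
                if_neg (by omega : ¬ a + 1 = 1)]
              have h3 := hadj (a-1) (by omega)
              have h4 : a - 1 + 1 = a := by omega
              rw [h4] at h3
              have h5 : a + 1 - 1 = a := by omega
              rw [h5]
              exact h3
        · intro w
          obtain ⟨i2, hi2', hd2⟩ := hdom w
          rcases Nat.eq_zero_or_pos i2 with rfl | hi21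
          · refine ⟨2, by omega, ?_⟩
            rw [if_neg (by omega : ¬ (2:ℕ) = 0), if_neg (by omega : ¬ (2:ℕ) = 1)]
            norm_num
            exact (hshift0 _ hd2).trans one_le_two
          · refine ⟨i2+1, by omega, ?_⟩
            rw [if_neg (by omega : ¬ i2 + 1 = 0), if_neg (by omega : ¬ i2 + 1 = 1)]
            have h5 : i2 + 1 - 1 = i2 := by omega
            rw [h5]
            exact hd2
      omega
    · exact ⟨i, hi', hi2, hadjx⟩

  -- the contracted caterpillar data
  set t := p - 1 with ht
  have ht2 : 2 ≤ t := by omega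
  set I : Finset V := Finset.univ.filter (fun x => ¬ (G.neighborSet x).ncard = 1) with hI
  have hInt : ∀ x, x ∈ I ↔ ¬ (G.neighborSet x).ncard = 1 := by
    intro x
    simp [hI]
  set sN := I.card with hsN
  have hmuinj : Function.Injective μ := by
    intro a b h
    rw [← hμμ a, h, hμμ b]
  have hcard2 : n = 2 * sN := by
    have h1 := Finset.card_filter_add_card_filter_not
      (s := (Finset.univ : Finset V)) (p := fun x => ¬ (G.neighborSet x).ncard = 1)
    have hLI : Finset.univ.filter (fun x => ¬ ¬ (G.neighborSet x).ncard = 1) = I.image μ := by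
      ext x
      simp only [Finset.mem_filter, Finset.mem_univ, true_and, Finset.mem_image, hInt, not_not]
      constructor
      · intro hx
        exact ⟨μ x, hnotboth x hx, hμμ x⟩
      · rintro ⟨y, hy, rfl⟩
        exact (hMleaf y).resolve_left hy
    rw [hLI, Finset.card_image_of_injective _ hmuinj, Finset.card_univ] at h1
    rw [← hI] at h1
    omega
  have hsN2 : 2 ≤ sN := by omega
  -- the spine
  set S : Finset V := (Finset.Icc 1 t).image v with hS
  have hvinjIcc : Set.InjOn v (Finset.Icc 1 t) := by
    intro a ha b hb hab
    simp only [Finset.coe_Icc, Set.mem_Icc] at ha hb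
    exact hinj a (by omega) b (by omega) hab
  have hScard : S.card = t := by
    rw [hS, Finset.card_image_of_injOn hvinjIcc, Nat.card_Icc]
    omega
  have hSmemv : ∀ i, 1 ≤ i → i ≤ t → v i ∈ S := by
    intro i h1 h2
    rw [hS]
    exact Finset.mem_image_of_mem v (Finset.mem_Icc.mpr ⟨h1, h2⟩)
  have hSsub : S ⊆ I := by
    intro x hx
    rw [hS] at hx
    obtain ⟨i, hi, rfl⟩ := Finset.mem_image.mp hx
    rw [Finset.mem_Icc] at hi
    rw [hInt]
    exact hspine_int i (by omega) (by omega)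
  set Lg : Finset V := I \ S with hLg
  have hLgmem : ∀ x, x ∈ Lg ↔ (¬ (G.neighborSet x).ncard = 1 ∧ x ∉ S) := by
    intro x
    rw [hLg, Finset.mem_sdiff, hInt]
  -- σ : the spine attachment of each leg
  have hsig0 : ∀ x, ∃ i, x ∈ Lg → (2 ≤ i ∧ i ≤ t ∧ G.Adj x (v i)) := by
    intro x
    by_cases hx : x ∈ Lg
    · have hx' := (hLgmem x).mp hx
      have hxns : ∀ k, 1 ≤ k → k ≤ p - 1 → x ≠ v k := by
        intro k h1 h2 h
        exact hx'.2 (h ▸ hSmemv k h1 (by omega))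
      obtain ⟨i, h1, h2, h3⟩ := hlegadj x hx'.1 hxns
      exact ⟨i, fun _ => ⟨h1, by omega, h3⟩⟩
    · exact ⟨0, fun h => absurd h hx⟩
  choose σ hσ using hsig0
  set c : ℕ → ℕ := fun i => (Lg.filter (fun x => σ x = i)).card with hc
  have hsum : Lg.card = ∑ i ∈ Finset.Ico 1 (t+1), c i := by
    apply Finset.card_eq_sum_card_fiberwise
    intro x hx
    have := (hσ x hx)
    rw [Finset.mem_coe, Finset.mem_Ico]
    omega
  have hc1 : c 1 = 0 := by
    rw [hc]
    simp only []
    rw [Finset.card_eq_zero, Finset.filter_eq_empty_iff]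
    intro x hx
    have := hσ x hx
    omega
  have hLgcard : Lg.card = sN - t := by
    rw [hLg, Finset.card_sdiff_of_subset hSsub, hScard]
  have htle : t ≤ sN := by
    have := Finset.card_le_card hSsub
    rw [hScard] at this
    exact this
  have hsTot : sTot c t = sN := by
    rw [sTot, ← hsum, hLgcard]
    omega
  -- the index of a leg among the legs at the same spine vertex
  have hRex : ∃ R : ℕ → V → ℕ, ∀ i, ∀ x, x ∈ Lg.filter (fun y => σ y = i) →
      ((1 ≤ R i x ∧ R i x ≤ (Lg.filter (fun y => σ y = i)).card) ∧
       ∀ y, y ∈ Lg.filter (fun y => σ y = i) → R i x = R i y → x = y) := by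
    refine ⟨fun i x => if hx : x ∈ Lg.filter (fun y => σ y = i) then
      (((Lg.filter (fun y => σ y = i)).equivFin ⟨x, hx⟩).val + 1) else 0, ?_⟩
    intro i x hx
    simp only [dif_pos hx]
    refine ⟨⟨by omega, ?_⟩, ?_⟩
    · have h1 := ((Lg.filter (fun y => σ y = i)).equivFin ⟨x, hx⟩).isLt
      omega
    · intro y hy h
      simp only [dif_pos hy] at h
      have h2 : ((Lg.filter (fun y => σ y = i)).equivFin ⟨x, hx⟩) =
          ((Lg.filter (fun y => σ y = i)).equivFin ⟨y, hy⟩) := by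
        apply Fin.ext
        omega
      have h3 := (Lg.filter (fun y => σ y = i)).equivFin.injective h2
      exact congrArg Subtype.val h3
  obtain ⟨R, hR⟩ := hRex
  set rdx : V → ℕ := fun x => R (σ x) x with hrdx
  have hmemfil : ∀ x ∈ Lg, x ∈ Lg.filter (fun y => σ y = σ x) := by
    intro x hx
    rw [Finset.mem_filter]
    exact ⟨hx, rfl⟩
  have hr1 : ∀ x ∈ Lg, 1 ≤ rdx x := by
    intro x hx
    exact ((hR (σ x) x (hmemfil x hx)).1).1
  have hr2 : ∀ x ∈ Lg, rdx x ≤ c (σ x) := by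
    intro x hx
    exact ((hR (σ x) x (hmemfil x hx)).1).2
  have hrinj : ∀ x ∈ Lg, ∀ y ∈ Lg, σ x = σ y → rdx x = rdx y → x = y := by
    intro x hx y hy hsxy hr
    apply (hR (σ x) x (hmemfil x hx)).2 y
    · rw [hsxy]
      exact hmemfil y hy
    · rw [hrdx] at hr
      simp only [] at hr
      rw [hsxy] at hr ⊢
      exact hr
  -- spine index
  have hsidxex : ∃ sidx : V → ℕ, ∀ i, 1 ≤ i → i ≤ t → sidx (v i) = i := by
    refine ⟨fun x => if hx : ∃ i, 1 ≤ i ∧ i ≤ t ∧ v i = x then hx.choose else 0, ?_⟩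
    intro i h1 h2
    have hex2 : ∃ j, 1 ≤ j ∧ j ≤ t ∧ v j = v i := ⟨i, h1, h2, rfl⟩
    simp only [dif_pos hex2]
    obtain ⟨h3, h4, h5⟩ := hex2.choose_spec
    exact hinj _ (by omega) _ (by omega) h5
  obtain ⟨sidx, hsidx⟩ := hsidxex
  have hSdata : ∀ x ∈ S, 1 ≤ sidx x ∧ sidx x ≤ t ∧ v (sidx x) = x := by
    intro x hx
    rw [hS] at hx
    obtain ⟨i, hi, rfl⟩ := Finset.mem_image.mp hx
    rw [Finset.mem_Icc] at hi
    rw [hsidx i hi.1 hi.2]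
    exact ⟨hi.1, hi.2, rfl⟩

  -- position and class functions
  set K : V → ℕ := fun x => if x ∈ S then kS c (sidx x) else kL c (σ x) (rdx x) with hK
  set cls : V → ℕ := fun x => if x ∈ S then (sidx x) % 2 else (σ x + 1) % 2 with hcls
  have hKSval : ∀ x ∈ S, K x = kS c (sidx x) := by
    intro x hx
    rw [hK]
    simp only [if_pos hx]
  have hclsSval : ∀ x ∈ S, cls x = sidx x % 2 := by
    intro x hx
    rw [hcls]
    simp only [if_pos hx]
  have hLgS : ∀ x ∈ Lg, x ∉ S := by
    intro x hx
    exact ((hLgmem x).mp hx).2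
  have hKLval : ∀ x ∈ Lg, K x = kL c (σ x) (rdx x) := by
    intro x hx
    rw [hK]
    simp only [if_neg (hLgS x hx)]
  have hclsLval : ∀ x ∈ Lg, cls x = (σ x + 1) % 2 := by
    intro x hx
    rw [hcls]
    simp only [if_neg (hLgS x hx)]
  have hIcases : ∀ x ∈ I, x ∈ S ∨ x ∈ Lg := by
    intro x hx
    by_cases h : x ∈ S
    · exact Or.inl h
    · exact Or.inr (Finset.mem_sdiff.mpr ⟨hx, h⟩)
  have hK1 : ∀ x ∈ I, 1 ≤ K x := by
    intro x hx
    rcases hIcases x hx with h | h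
    · rw [hKSval x h]
      exact kS_pos c (hSdata x h).1
    · rw [hKLval x h]
      exact kL_pos c (hr1 x h)
  have hσ1 : ∀ x ∈ Lg, 1 ≤ σ x := by
    intro x hx
    have := (hσ x hx).1
    omega
  have hKopp : ∀ x ∈ I, ∀ y ∈ I, cls x ≠ cls y → K x + K y ≤ sN := by
    intro x hx y hy hne
    rw [← hsTot]
    rcases hIcases x hx with h1 | h1 <;> rcases hIcases y hy with h2 | h2
    · rw [hKSval x h1, hKSval y h2]
      rw [hclsSval x h1, hclsSval y h2] at hne
      exact kSS_le c (hSdata x h1).1 (hSdata x h1).2.1 (hSdata y h2).1 (hSdata y h2).2.1 hne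
    · rw [hKSval x h1, hKLval y h2]
      rw [hclsSval x h1, hclsLval y h2] at hne
      exact kSL_le c (hSdata x h1).1 (hSdata x h1).2.1 (hσ1 y h2)
        (hσ y h2).2.1 (by omega) (hr1 y h2) (hr2 y h2)
    · rw [hKSval y h2, hKLval x h1, Nat.add_comm]
      rw [hclsSval y h2, hclsLval x h1] at hne
      exact kSL_le c (hSdata y h2).1 (hSdata y h2).2.1 (hσ1 x h1)
        (hσ x h1).2.1 (by omega) (hr1 x h1) (hr2 x h1)
    · rw [hKLval x h1, hKLval y h2]
      rw [hclsLval x h1, hclsLval y h2] at hne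
      exact kLL_le c (hσ1 x h1) (hσ x h1).2.1
        (hσ1 y h2) (hσ y h2).2.1 (by omega)
        (hr1 x h1) (hr2 x h1) (hr1 y h2) (hr2 y h2)
  have hKinjc : ∀ x ∈ I, ∀ y ∈ I, cls x = cls y → K x = K y → x = y := by
    intro x hx y hy hcl hk
    rcases hIcases x hx with h1 | h1 <;> rcases hIcases y hy with h2 | h2
    · rw [hKSval x h1, hKSval y h2] at hk
      rw [hclsSval x h1, hclsSval y h2] at hcl
      have := kS_inj c hcl hk
      rw [← (hSdata x h1).2.2, ← (hSdata y h2).2.2, this]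
    · exfalso
      rw [hKSval x h1, hKLval y h2] at hk
      rw [hclsSval x h1, hclsLval y h2] at hcl
      exact kS_ne_kL c (hSdata x h1).1 (hσ1 y h2) (by omega)
        (hr1 y h2) (hr2 y h2) hk
    · exfalso
      rw [hKSval y h2, hKLval x h1] at hk
      rw [hclsSval y h2, hclsLval x h1] at hcl
      exact kS_ne_kL c (hSdata y h2).1 (hσ1 x h1) (by omega)
        (hr1 x h1) (hr2 x h1) hk.symm
    · rw [hKLval x h1, hKLval y h2] at hk
      rw [hclsLval x h1, hclsLval y h2] at hcl
      obtain ⟨hs, hr⟩ := kL_inj c (hσ1 x h1) (hσ1 y h2)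
        (by omega) (hr1 x h1) (hr2 x h1) (hr1 y h2) (hr2 y h2) hk
      exact hrinj x h1 y h2 hs hr
  have hv1S : v 1 ∈ S := hSmemv 1 (by omega) (by omega)
  have hv2S : v 2 ∈ S := hSmemv 2 (by omega) ht2
  have hsidx1 : sidx (v 1) = 1 := hsidx 1 (by omega) (by omega)
  have hsidx2 : sidx (v 2) = 2 := hsidx 2 (by omega) ht2
  have hKle : ∀ x ∈ I, K x ≤ sN - 1 := by
    intro x hx
    by_cases hcl : cls x = cls (v 1)
    · have hne : cls x ≠ cls (v 2) := by
        rw [hcl, hclsSval _ hv1S, hclsSval _ hv2S, hsidx1, hsidx2]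
        omega
      have h1 := hKopp x hx (v 2) (hSsub hv2S) hne
      have h2 := hK1 (v 2) (hSsub hv2S)
      omega
    · have h1 := hKopp x hx (v 1) (hSsub hv1S) hcl
      have h2 := hK1 (v 1) (hSsub hv1S)
      omega
  -- edge classification
  have hleafμ : ∀ x ∈ I, (G.neighborSet (μ x)).ncard = 1 := by
    intro x hx
    exact (hMleaf x).resolve_left ((hInt x).mp hx)
  set EM : Finset (Sym2 V) := I.image (fun u => s(u, μ u)) with hEMdef
  set ES : Finset (Sym2 V) := (Finset.Icc 1 (t-1)).image (fun i => s(v i, v (i+1))) with hESdef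
  set EL : Finset (Sym2 V) := Lg.image (fun u => s(u, v (σ u))) with hELdef
  have hEMcard : EM.card = sN := by
    rw [hEMdef, Finset.card_image_of_injOn]
    intro a ha b hb hab
    rw [Finset.mem_coe] at ha hb
    rw [Sym2.eq_iff] at hab
    rcases hab with ⟨h1, h2⟩ | ⟨h1, h2⟩
    · exact h1
    · exfalso
      apply (hInt a).mp ha
      rw [h1]
      exact hleafμ b hb
  have hEScard : ES.card = t - 1 := by
    rw [hESdef, Finset.card_image_of_injOn, Nat.card_Icc]
    · omega
    · intro a ha b hb hab
      rw [Finset.coe_Icc, Set.mem_Icc] at ha hb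
      rw [Sym2.eq_iff] at hab
      rcases hab with ⟨h1, h2⟩ | ⟨h1, h2⟩
      · exact hinj a (by omega) b (by omega) h1
      · have e1 := hinj a (by omega) (b+1) (by omega) h1
        have e2 := hinj (a+1) (by omega) b (by omega) h2
        omega
  have hELcard : EL.card = sN - t := by
    rw [hELdef, Finset.card_image_of_injOn, ← hLgcard]
    intro a ha b hb hab
    rw [Finset.mem_coe] at ha hb
    rw [Sym2.eq_iff] at hab
    rcases hab with ⟨h1, h2⟩ | ⟨h1, h2⟩
    · exact h1
    · exfalso
      exact hLgS a ha (h1 ▸ hSmemv (σ b) (by have := (hσ b hb).1; omega) (hσ b hb).2.1)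
  have hspineI : ∀ i, 1 ≤ i → i ≤ t → v i ∈ I := fun i h1 h2 => hSsub (hSmemv i h1 h2)
  have hdisj1 : Disjoint EM ES := by
    rw [Finset.disjoint_left]
    intro e he1 he2
    rw [hEMdef, Finset.mem_image] at he1
    rw [hESdef, Finset.mem_image] at he2
    obtain ⟨u, hu, rfl⟩ := he1
    obtain ⟨i, hi, hei⟩ := he2
    rw [Finset.mem_Icc] at hi
    rw [Sym2.eq_iff] at hei
    rcases hei with ⟨h1, h2⟩ | ⟨h1, h2⟩
    · exact (hInt _).mp (hspineI (i+1) (by omega) (by omega)) (by rw [h2]; exact hleafμ u hu)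
    · exact (hInt _).mp (hspineI i (by omega) (by omega)) (by rw [h1]; exact hleafμ u hu)
  have hdisj2 : Disjoint EM EL := by
    rw [Finset.disjoint_left]
    intro e he1 he2
    rw [hEMdef, Finset.mem_image] at he1
    rw [hELdef, Finset.mem_image] at he2
    obtain ⟨u, hu, rfl⟩ := he1
    obtain ⟨w, hw, hei⟩ := he2
    rw [Sym2.eq_iff] at hei
    rcases hei with ⟨h1, h2⟩ | ⟨h1, h2⟩
    · exact (hInt _).mp (hspineI (σ w) (hσ1 w hw) (hσ w hw).2.1)
        (by rw [h2]; exact hleafμ u hu)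
    · exact ((hLgmem w).mp hw).1 (by rw [h1]; exact hleafμ u hu)
  have hdisj3 : Disjoint ES EL := by
    rw [Finset.disjoint_left]
    intro e he1 he2
    rw [hESdef, Finset.mem_image] at he1
    rw [hELdef, Finset.mem_image] at he2
    obtain ⟨i, hi, rfl⟩ := he1
    obtain ⟨w, hw, hei⟩ := he2
    rw [Finset.mem_Icc] at hi
    rw [Sym2.eq_iff] at hei
    rcases hei with ⟨h1, h2⟩ | ⟨h1, h2⟩
    · exact hLgS w hw (by rw [h1]; exact hSmemv i (by omega) (by omega))
    · exact hLgS w hw (by rw [h1]; exact hSmemv (i+1) (by omega) (by omega))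
  letI : Fintype G.edgeSet := Fintype.ofFinite _
  have hedgecard : G.edgeFinset.card + 1 = n := hT.card_edgeFinset
  have hsubE : EM ∪ ES ∪ EL ⊆ G.edgeFinset := by
    intro e he
    rw [Finset.mem_union, Finset.mem_union] at he
    rw [SimpleGraph.mem_edgeFinset]
    rcases he with (he | he) | he
    · rw [hEMdef, Finset.mem_image] at he
      obtain ⟨u, _, rfl⟩ := he
      exact hμG u
    · rw [hESdef, Finset.mem_image] at he
      obtain ⟨i, hi, rfl⟩ := he
      rw [Finset.mem_Icc] at hi
      exact hadj i (by omega)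
    · rw [hELdef, Finset.mem_image] at he
      obtain ⟨w, hw, rfl⟩ := he
      exact (hσ w hw).2.2
  have hEcard : (EM ∪ ES ∪ EL).card = n - 1 := by
    rw [Finset.card_union_of_disjoint (by
        rw [Finset.disjoint_union_left]
        exact ⟨hdisj2, hdisj3⟩),
      Finset.card_union_of_disjoint hdisj1, hEMcard, hEScard, hELcard]
    omega
  have hEeq : EM ∪ ES ∪ EL = G.edgeFinset := by
    apply Finset.eq_of_subset_of_card_le hsubE
    rw [hEcard]
    omega
  have hclassE : ∀ x y, G.Adj x y → s(x,y) ∈ EM ∨ s(x,y) ∈ ES ∨ s(x,y) ∈ EL := by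
    intro x y hxy
    have : s(x,y) ∈ EM ∪ ES ∪ EL := by
      rw [hEeq, SimpleGraph.mem_edgeFinset]
      exact hxy
    rw [Finset.mem_union, Finset.mem_union] at this
    tauto


  have hncard : G.edgeSet.ncard = n - 1 := by
    rw [Set.ncard_eq_toFinset_card']
    rw [show G.edgeSet.toFinset = G.edgeFinset from rfl]
    omega
  have hμnotI : ∀ x ∈ I, μ x ∉ I := by
    intro x hx h
    exact (hInt (μ x)).mp h (hleafμ x hx)
  have hμI : ∀ x, x ∉ I → μ x ∈ I := by
    intro x hx
    rw [hInt]
    rw [hInt, not_not] at hx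
    exact hnotboth x hx
  have hcls2 : ∀ x, cls x < 2 := by
    intro x
    simp only [hcls]
    split <;> omega
  have hNfle : ∀ j, j ≤ t + 1 → Nf c j ≤ sN + 1 := by
    intro j hj
    have h1 := Nf_mono_le c hj
    rw [Nf_top, hsTot] at h1
    omega
  have hlegsum : ∀ u ∈ Lg, Nf c (σ u) + rdx u ≤ sN ∧
      Nf c (σ u) < Nf c (σ u) + rdx u ∧ Nf c (σ u) + rdx u < Nf c (σ u + 1) := by
    intro u hu
    have h1 := hr1 u hu
    have h2 := hr2 u hu
    have h3 := Nf_succ c (hσ1 u hu)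
    have h4 : Nf c (σ u + 1) ≤ sN + 1 := hNfle _ (by have := (hσ u hu).2.1; omega)
    omega
  have build : ∀ qq : ℕ, qq < 2 → ∃ f : V → ℕ,
      (Function.Injective f ∧ (∀ x, f x ≤ G.edgeSet.ncard) ∧
       (∀ a b x2 y2, G.Adj a b → G.Adj x2 y2 →
         Nat.dist (f a) (f b) = Nat.dist (f x2) (f y2) → s(a,b) = s(x2,y2)) ∧
       (∀ x y, M.Adj x y → f x + f y = n - 1)) ∧
      (∀ x ∈ I, f x = 2 * (if cls x = qq then K x - 1 else sN - K x)) := by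
    intro qq hqq
    set g : V → ℕ := fun x => if cls x = qq then K x - 1 else sN - K x with hg
    set f : V → ℕ := fun x => if x ∈ I then 2 * g x else (n-1) - 2 * g (μ x) with hf
    have hfI : ∀ x ∈ I, f x = 2 * g x := by
      intro x hx
      rw [hf]
      simp only [if_pos hx]
    have hfN : ∀ x, x ∉ I → f x = (n-1) - 2 * g (μ x) := by
      intro x hx
      rw [hf]
      simp only [if_neg hx]
    have hgle : ∀ x ∈ I, g x ≤ sN - 1 := by
      intro x hx
      have h1 := hK1 x hx
      have h2 := hKle x hx
      simp only [hg]
      split <;> omega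
    have hginj : ∀ x ∈ I, ∀ y ∈ I, g x = g y → x = y := by
      intro x hx y hy hxy
      have hb1 := hK1 x hx
      have hb2 := hK1 y hy
      have hb3 := hKle x hx
      have hb4 := hKle y hy
      simp only [hg] at hxy
      by_cases c1 : cls x = qq <;> by_cases c2 : cls y = qq
      · rw [if_pos c1, if_pos c2] at hxy
        exact hKinjc x hx y hy (by rw [c1, c2]) (by omega)
      · exfalso
        rw [if_pos c1, if_neg c2] at hxy
        have := hKopp x hx y hy (by rw [c1]; exact fun h => c2 h.symm)
        omega
      · exfalso
        rw [if_neg c1, if_pos c2] at hxy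
        have := hKopp x hx y hy (by rw [c2]; exact c1)
        omega
      · rw [if_neg c1, if_neg c2] at hxy
        have hc2x := hcls2 x
        have hc2y := hcls2 y
        exact hKinjc x hx y hy (by omega) (by omega)
    have hfinj : Function.Injective f := by
      intro a b hab
      by_cases ha : a ∈ I <;> by_cases hb : b ∈ I
      · rw [hfI a ha, hfI b hb] at hab
        exact hginj a ha b hb (by omega)
      · exfalso
        rw [hfI a ha, hfN b hb] at hab
        have h1 := hgle (μ b) (hμI b hb)
        omega
      · exfalso
        rw [hfN a ha, hfI b hb] at hab
        have h1 := hgle (μ a) (hμI a ha)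
        omega
      · rw [hfN a ha, hfN b hb] at hab
        have h1 := hgle (μ a) (hμI a ha)
        have h2 := hgle (μ b) (hμI b hb)
        have h3 : g (μ a) = g (μ b) := by omega
        have h4 := hginj (μ a) (hμI a ha) (μ b) (hμI b hb) h3
        exact hmuinj h4
    have hfle : ∀ x, f x ≤ G.edgeSet.ncard := by
      intro x
      rw [hncard]
      by_cases hx : x ∈ I
      · rw [hfI x hx]
        have := hgle x hx
        omega
      · rw [hfN x hx]
        omega
    have hstrong : ∀ x y, M.Adj x y → f x + f y = n - 1 := by
      intro x y hxy
      have hy := huniq x y hxy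
      subst hy
      by_cases hx : x ∈ I
      · rw [hfI x hx, hfN (μ x) (hμnotI x hx), hμμ]
        have := hgle x hx
        omega
      · rw [hfN x hx, hfI (μ x) (hμI x hx)]
        have := hgle (μ x) (hμI x hx)
        omega
    have hedgeval : ∀ x ∈ I, ∀ y ∈ I, cls x ≠ cls y →
        Nat.dist (f x) (f y) = 2 * (sN + 1 - (K x + K y)) := by
      intro x hx y hy hne
      rw [hfI x hx, hfI y hy]
      have hb1 := hK1 x hx
      have hb2 := hK1 y hy
      have hb3 := hKle x hx
      have hb4 := hKle y hy
      have hopp := hKopp x hx y hy hne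
      have hc2x := hcls2 x
      have hc2y := hcls2 y
      simp only [hg, Nat.dist]
      by_cases c1 : cls x = qq
      · have c2 : ¬ cls y = qq := by omega
        rw [if_pos c1, if_neg c2]
        omega
      · have c2 : cls y = qq := by omega
        rw [if_neg c1, if_pos c2]
        omega
    have hvaledge : ∀ a b, G.Adj a b →
        (∃ u, u ∈ I ∧ s(a,b) = s(u, μ u) ∧
          Nat.dist (f a) (f b) = Nat.dist (2 * g u) (n - 1 - 2 * g u)) ∨
        (∃ i, 1 ≤ i ∧ i ≤ t-1 ∧ s(a,b) = s(v i, v (i+1)) ∧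
          Nat.dist (f a) (f b) = 2 * (sN + 1 - Nf c (i+1))) ∨
        (∃ u, u ∈ Lg ∧ s(a,b) = s(u, v (σ u)) ∧
          Nat.dist (f a) (f b) = 2 * (sN + 1 - (Nf c (σ u) + rdx u))) := by
      intro a b hab
      have hdsym : ∀ x2 y2 : V, s(a,b) = s(x2,y2) →
          Nat.dist (f a) (f b) = Nat.dist (f x2) (f y2) := by
        intro x2 y2 h
        rw [Sym2.eq_iff] at h
        rcases h with ⟨rfl, rfl⟩ | ⟨rfl, rfl⟩
        · rfl
        · exact Nat.dist_comm _ _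
      rcases hclassE a b hab with h | h | h
      · left
        rw [hEMdef, Finset.mem_image] at h
        obtain ⟨u, hu, he⟩ := h
        refine ⟨u, hu, he.symm, ?_⟩
        rw [hdsym u (μ u) he.symm, hfI u hu, hfN (μ u) (hμnotI u hu), hμμ]
      · right
        left
        rw [hESdef, Finset.mem_image] at h
        obtain ⟨i, hi, he⟩ := h
        rw [Finset.mem_Icc] at hi
        refine ⟨i, hi.1, hi.2, he.symm, ?_⟩
        rw [hdsym _ _ he.symm]
        have hvi : v i ∈ I := hspineI i (by omega) (by omega)
        have hvi1 : v (i+1) ∈ I := hspineI (i+1) (by omega) (by omega)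
        have hci : cls (v i) = i % 2 := by
          rw [hclsSval _ (hSmemv i (by omega) (by omega)), hsidx i (by omega) (by omega)]
        have hci1 : cls (v (i+1)) = (i+1) % 2 := by
          rw [hclsSval _ (hSmemv (i+1) (by omega) (by omega)), hsidx (i+1) (by omega) (by omega)]
        rw [hedgeval _ hvi _ hvi1 (by omega)]
        have hKi : K (v i) = kS c i := by
          rw [hKSval _ (hSmemv i (by omega) (by omega)), hsidx i (by omega) (by omega)]
        have hKi1 : K (v (i+1)) = kS c (i+1) := by
          rw [hKSval _ (hSmemv (i+1) (by omega) (by omega)), hsidx (i+1) (by omega) (by omega)]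
        rw [hKi, hKi1, sigmaS c (by omega)]
      · right
        right
        rw [hELdef, Finset.mem_image] at h
        obtain ⟨u, hu, he⟩ := h
        refine ⟨u, hu, he.symm, ?_⟩
        rw [hdsym _ _ he.symm]
        have huI : u ∈ I := (Finset.mem_sdiff.mp hu).1
        have hsu1 : 1 ≤ σ u := hσ1 u hu
        have hsut : σ u ≤ t := (hσ u hu).2.1
        have hvs : v (σ u) ∈ I := hspineI _ hsu1 hsut
        have hcu : cls u = (σ u + 1) % 2 := hclsLval u hu
        have hcv : cls (v (σ u)) = σ u % 2 := by
          rw [hclsSval _ (hSmemv _ hsu1 hsut), hsidx _ hsu1 hsut]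
        rw [hedgeval _ huI _ hvs (by omega)]
        rw [hKLval u hu, hKSval _ (hSmemv _ hsu1 hsut), hsidx _ hsu1 hsut]
        rw [Nat.add_comm (kL c (σ u) (rdx u)) (kS c (σ u)), sigmaL c hsu1]
    have hmlab : ∀ u ∈ I, ∀ u' ∈ I,
        Nat.dist (2 * g u) (n - 1 - 2 * g u) = Nat.dist (2 * g u') (n - 1 - 2 * g u') →
        u = u' := by
      intro u hu u' hu' h
      have b1 := hgle u hu
      have b2 := hgle u' hu'
      apply hginj u hu u' hu'
      simp only [Nat.dist] at h
      omega
    have hmodd : ∀ u ∈ I, Nat.dist (2 * g u) (n - 1 - 2 * g u) % 2 = 1 := by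
      intro u hu
      have b1 := hgle u hu
      simp only [Nat.dist]
      omega
    have hgrace : ∀ a b x2 y2, G.Adj a b → G.Adj x2 y2 →
        Nat.dist (f a) (f b) = Nat.dist (f x2) (f y2) → s(a,b) = s(x2,y2) := by
      intro a b x2 y2 hab hxy hd
      rcases hvaledge a b hab with ⟨u, hu, he, hv⟩ | ⟨i, hi1, hi2, he, hv⟩ | ⟨u, hu, he, hv⟩ <;>
        rcases hvaledge x2 y2 hxy with ⟨u', hu', he', hv'⟩ | ⟨i', hi1', hi2', he', hv'⟩ |
          ⟨u', hu', he', hv'⟩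
      · rw [he, he', hmlab u hu u' hu' (by rw [← hv, ← hv']; exact hd)]
      · exfalso
        have h1 := hmodd u hu
        rw [hv, hv'] at hd
        omega
      · exfalso
        have h1 := hmodd u hu
        rw [hv, hv'] at hd
        omega
      · exfalso
        have h1 := hmodd u' hu'
        rw [hv, hv'] at hd
        omega
      · rw [he, he']
        rw [hv, hv'] at hd
        have b1 := hNfle (i+1) (by omega)
        have b2 := hNfle (i'+1) (by omega)
        have heq : Nf c (i+1) = Nf c (i'+1) := by omega
        have hii : i = i' := by
          rcases lt_trichotomy i i' with h | h | h
          · exact absurd heq (Nf_mono c (by omega)).ne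
          · exact h
          · exact absurd heq.symm (Nf_mono c (by omega)).ne
        rw [hii]
      · exfalso
        rw [hv, hv'] at hd
        obtain ⟨b1, b2, b3⟩ := hlegsum u' hu'
        have b4 := hNfle (i+1) (by omega)
        have heq : Nf c (i+1) = Nf c (σ u') + rdx u' := by omega
        rcases Nat.lt_or_ge (i+1) (σ u' + 1) with h | h
        · have := Nf_mono_le c (show i+1 ≤ σ u' by omega)
          omega
        · have := Nf_mono_le c (show σ u' + 1 ≤ i+1 from h)
          omega
      · exfalso
        have h1 := hmodd u' hu'
        rw [hv, hv'] at hd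
        omega
      · exfalso
        rw [hv, hv'] at hd
        obtain ⟨b1, b2, b3⟩ := hlegsum u hu
        have b4 := hNfle (i'+1) (by omega)
        have heq : Nf c (i'+1) = Nf c (σ u) + rdx u := by omega
        rcases Nat.lt_or_ge (i'+1) (σ u + 1) with h | h
        · have := Nf_mono_le c (show i'+1 ≤ σ u by omega)
          omega
        · have := Nf_mono_le c (show σ u + 1 ≤ i'+1 from h)
          omega
      · rw [he, he']
        rw [hv, hv'] at hd
        obtain ⟨b1, b2, b3⟩ := hlegsum u hu
        obtain ⟨b1', b2', b3'⟩ := hlegsum u' hu'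
        have heq : Nf c (σ u) + rdx u = Nf c (σ u') + rdx u' := by omega
        have hss : σ u = σ u' := by
          rcases lt_trichotomy (σ u) (σ u') with h | h | h
          · exfalso
            have := Nf_mono_le c (show σ u + 1 ≤ σ u' from h)
            omega
          · exact h
          · exfalso
            have := Nf_mono_le c (show σ u' + 1 ≤ σ u from h)
            omega
        have hrr : rdx u = rdx u' := by
          rw [hss] at heq
          omega
        rw [hrinj u hu u' hu' hss hrr]
    refine ⟨f, ⟨hfinj, hfle, hgrace, hstrong⟩, ?_⟩
    intro x hx
    rw [hfI x hx]
  constructor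
  · have h0 := hadjM (v 0)
    rw [hμv0] at h0
    exact h0
  · obtain ⟨f1, hf1, hf1val⟩ := build 1 (by omega)
    obtain ⟨f2, hf2, hf2val⟩ := build 0 (by omega)
    refine ⟨f1, f2, ⟨hf1.1, hf1.2.1, hf1.2.2.1, hf1.2.2.2⟩,
      ⟨hf2.1, hf2.2.1, hf2.2.2.1, hf2.2.2.2⟩, ?_, ?_⟩
    · rw [hf1val (v 1) (hSsub hv1S)]
      have e1 : cls (v 1) = 1 := by rw [hclsSval _ hv1S, hsidx1]
      have e2 : K (v 1) = kS c 1 := by rw [hKSval _ hv1S, hsidx1]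
      rw [e1, e2, if_pos rfl, kS_one c]
    · rw [hf2val (v 2) (hSsub hv2S)]
      have e1 : cls (v 2) = 0 := by rw [hclsSval _ hv2S, hsidx2]
      have e2 : K (v 2) = kS c 2 := by rw [hKSval _ hv2S, hsidx2]
      rw [e1, e2, if_pos rfl, kS_two c, hc1]


end SGLaux

namespace SGLaux

lemma compl_lab {V : Type} [Fintype V] {G : SimpleGraph V} {M : G.Subgraph}
    (hT : G.IsTree) (hcard : 4 ≤ Fintype.card V) (f : V → ℕ)
    (h1 : Function.Injective f) (h2 : ∀ x, f x ≤ G.edgeSet.ncard)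
    (h3 : ∀ a b x y, G.Adj a b → G.Adj x y →
      Nat.dist (f a) (f b) = Nat.dist (f x) (f y) → s(a,b) = s(x,y))
    (h4 : ∀ x y, M.Adj x y → f x + f y = Fintype.card V - 1) :
    Function.Injective (fun x => (Fintype.card V - 1) - f x) ∧
    (∀ x, (fun x => (Fintype.card V - 1) - f x) x ≤ G.edgeSet.ncard) ∧
    (∀ a b x y, G.Adj a b → G.Adj x y →
      Nat.dist ((Fintype.card V - 1) - f a) ((Fintype.card V - 1) - f b) =
        Nat.dist ((Fintype.card V - 1) - f x) ((Fintype.card V - 1) - f y) →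
      s(a,b) = s(x,y)) ∧
    (∀ x y, M.Adj x y →
      ((Fintype.card V - 1) - f x) + ((Fintype.card V - 1) - f y) = Fintype.card V - 1) := by
  classical
  letI : Fintype G.edgeSet := Fintype.ofFinite _
  have hedge : G.edgeFinset.card + 1 = Fintype.card V := hT.card_edgeFinset
  have hnc : G.edgeSet.ncard = Fintype.card V - 1 := by
    rw [Set.ncard_eq_toFinset_card']
    rw [show G.edgeSet.toFinset = G.edgeFinset from rfl]
    omega
  have hb : ∀ x, f x ≤ Fintype.card V - 1 := by
    intro x
    have := h2 x
    omega
  refine ⟨?_, ?_, ?_, ?_⟩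
  · intro a b hab
    simp only [] at hab
    have ha := hb a
    have hbb := hb b
    exact h1 (by omega)
  · intro x
    show (Fintype.card V - 1) - f x ≤ _
    rw [hnc]
    omega
  · intro a b x y hab hxy hd
    rw [nat_dist_compl (hb a) (hb b), nat_dist_compl (hb x) (hb y)] at hd
    exact h3 a b x y hab hxy hd
  · intro x y hxy
    have := h4 x y hxy
    have hx := hb x
    have hy := hb y
    omega

end SGLaux

/-- Let `T` be a lobster on `n ≥ 4` vertices (`n` even) whose set of end edges is a
perfect matching `M`, and let `P = v 0, v 1, v 2, …, v p` be a maximal path such that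
every vertex is at distance at most 2 from `P`. Then there exist strong graceful
labellings `f, f₁, f₂, f₃` of `T` with `f (v 0) = 0`, `f₁ (v 1) = 0`, `f₂ (v 2) = 0`
and `f₃ u₂ = 0`, where `u₂` is the vertex matched with `v 2`. -/
theorem lobster_four_strong_graceful_labellings {V : Type} [Fintype V] (G : SimpleGraph V)
    (hT : G.IsTree) (hcard : 4 ≤ Fintype.card V) (hEven : Even (Fintype.card V))
    (M : G.Subgraph) (hM : M.IsPerfectMatching)
    (hMend : ∀ e, e ∈ M.edgeSet ↔ IsEndEdge G e)
    (p : ℕ) (v : ℕ → V) (hP : IsMaxDomPath G 2 p v) :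
    ∃ u₂ : V, M.Adj (v 2) u₂ ∧
      ∃ f f₁ f₂ f₃ : V → ℕ,
        IsStrongGracefulLabeling G M f ∧ IsStrongGracefulLabeling G M f₁ ∧
        IsStrongGracefulLabeling G M f₂ ∧ IsStrongGracefulLabeling G M f₃ ∧
        f (v 0) = 0 ∧ f₁ (v 1) = 0 ∧ f₂ (v 2) = 0 ∧ f₃ u₂ = 0 := by
  classical
  obtain ⟨hinj, hadj, hdom, hmax⟩ := hP
  obtain ⟨hM01, f₁, f₂, ⟨h11, h12, h13, h14⟩, ⟨h21, h22, h23, h24⟩, hv1, hv2⟩ :=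
    SGLaux.key hT hcard hM (fun e => hMend e) p v hinj hadj hdom hmax
  obtain ⟨u₂, hu₂, -⟩ := hM.1 (hM.2 (v 2))
  obtain ⟨hc1, hc2, hc3, hc4⟩ := SGLaux.compl_lab hT hcard f₁ h11 h12 h13 h14
  obtain ⟨hd1, hd2, hd3, hd4⟩ := SGLaux.compl_lab hT hcard f₂ h21 h22 h23 h24
  refine ⟨u₂, hu₂, (fun x => (Fintype.card V - 1) - f₁ x), f₁, f₂,
    (fun x => (Fintype.card V - 1) - f₂ x),
    ⟨⟨hc1, hc2, hc3⟩, hc4⟩, ⟨⟨h11, h12, h13⟩, h14⟩, ⟨⟨h21, h22, h23⟩, h24⟩,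
    ⟨⟨hd1, hd2, hd3⟩, hd4⟩, ?_, hv1, hv2, ?_⟩
  · have h := h14 (v 0) (v 1) hM01
    rw [hv1] at h
    simp only []
    omega
  · have h := h24 (v 2) u₂ hu₂
    rw [hv2] at h
    simp only []
    omega
end
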